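/- arXiv:2211.16902 — 8 statements merged into one kernel-verified Lean document; each statement's English description precedes it below -/
import Mathlib

section
/- For any partition λ = (λ_1, …, λ_k) in P_{k,n} and any integer p with 0 ≤ p ≤ n, the dual of the p-th Seidel shift equals the (n−p)-th Seidel shift of the dual: (λ↑p)^∨ = λ^∨↑(n−p). -/
/-- The first Seidel shift of a partition in `P_{k,n}`:
`λ↑1 = (λ₁+1, …, λ_k+1)` if `λ₁ < n-k`, and `(λ₂, …, λ_k, 0)` if `λ₁ = n-k`. -/
def seidelShift1 (n k : ℕ) (lam : Fin k → ℕ) : Fin k → ℕ :=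
  if hk : 0 < k then
    if lam ⟨0, hk⟩ = n - k then
      fun i => if h : (i : ℕ) + 1 < k then lam ⟨(i : ℕ) + 1, h⟩ else 0
    else fun i => lam i + 1
  else lam

/-- The `p`-th Seidel shift `λ↑p`. -/
def seidelShift (n k : ℕ) (p : ℕ) (lam : Fin k → ℕ) : Fin k → ℕ :=
  (seidelShift1 n k)^[p] lam

/-- The dual partition `λ^∨ = (n-k-λ_k, …, n-k-λ₁)`. -/
def dualPart (n k : ℕ) (lam : Fin k → ℕ) : Fin k → ℕ :=
  fun i => n - k - lam ⟨k - 1 - (i : ℕ), by have := i.isLt; omega⟩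

/-- `lam` is a partition in `P_{k,n}`. -/
def SIsPart (n k : ℕ) (lam : Fin k → ℕ) : Prop :=
  Antitone lam ∧ ∀ i, lam i ≤ n - k

/-- The inverse of the first Seidel shift. -/
def seidelDown (n k : ℕ) (lam : Fin k → ℕ) : Fin k → ℕ :=
  if hk : 0 < k then
    if lam ⟨k - 1, by omega⟩ = 0 then
      fun i => if (i : ℕ) = 0 then n - k else lam ⟨(i : ℕ) - 1, by have := i.isLt; omega⟩
    else fun i => lam i - 1
  else lam

namespace SeidelAux

variable {n k : ℕ}

theorem isPart_dual (hk : 1 ≤ k) (hkn : k < n) {lam : Fin k → ℕ}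
    (h : SIsPart n k lam) : SIsPart n k (dualPart n k lam) := by
  obtain ⟨ha, hle⟩ := h
  constructor
  · intro i j hij
    dsimp [dualPart]
    have h1 : lam ⟨k - 1 - (i : ℕ), by have := i.isLt; omega⟩ ≤
        lam ⟨k - 1 - (j : ℕ), by have := j.isLt; omega⟩ := by
      apply ha
      simp only [Fin.mk_le_mk]
      have := i.isLt; have := j.isLt
      have hij' : (i : ℕ) ≤ (j : ℕ) := hij
      omega
    omega
  · intro i; dsimp [dualPart]; omega

theorem isPart_shift1 (hk : 1 ≤ k) (hkn : k < n) {lam : Fin k → ℕ}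
    (h : SIsPart n k lam) : SIsPart n k (seidelShift1 n k lam) := by
  obtain ⟨ha, hle⟩ := h
  have hk' : 0 < k := hk
  rw [seidelShift1, dif_pos hk']
  by_cases h0 : lam ⟨0, hk'⟩ = n - k
  · rw [if_pos h0]
    constructor
    · intro i j hij
      have hij' : (i : ℕ) ≤ (j : ℕ) := hij
      dsimp only
      by_cases hi : (i : ℕ) + 1 < k
      · rw [dif_pos hi]
        by_cases hj : (j : ℕ) + 1 < k
        · rw [dif_pos hj]
          exact ha (by simp only [Fin.mk_le_mk]; omega)
        · rw [dif_neg hj]; omega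
      · rw [dif_neg hi, dif_neg (by omega)]
    · intro i
      dsimp only
      by_cases hi : (i : ℕ) + 1 < k
      · rw [dif_pos hi]; exact hle _
      · rw [dif_neg hi]; omega
  · rw [if_neg h0]
    constructor
    · intro i j hij
      have := ha hij; dsimp only; omega
    · intro i
      have h1 : lam i ≤ lam ⟨0, hk'⟩ := ha (by simp [Fin.le_def])
      have := hle ⟨0, hk'⟩
      dsimp only
      omega

theorem isPart_shift (hk : 1 ≤ k) (hkn : k < n) {lam : Fin k → ℕ}
    (h : SIsPart n k lam) (p : ℕ) : SIsPart n k (seidelShift n k p lam) := by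
  induction p with
  | zero => exact h
  | succ p ih =>
      rw [seidelShift, Function.iterate_succ', Function.comp_apply]
      exact isPart_shift1 hk hkn ih

theorem down_shift1 (hk : 1 ≤ k) (hkn : k < n) {lam : Fin k → ℕ}
    (h : SIsPart n k lam) : seidelDown n k (seidelShift1 n k lam) = lam := by
  obtain ⟨ha, hle⟩ := h
  have hk' : 0 < k := hk
  rw [seidelShift1, dif_pos hk', seidelDown, dif_pos hk']
  by_cases h0 : lam ⟨0, hk'⟩ = n - k
  · rw [if_pos h0]
    have hlast : (fun i : Fin k => if h : (i : ℕ) + 1 < k then lam ⟨(i : ℕ) + 1, h⟩ else 0)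
        ⟨k - 1, by omega⟩ = 0 := by
      dsimp only
      rw [dif_neg (by omega)]
    rw [if_pos hlast]
    funext i
    by_cases hi : (i : ℕ) = 0
    · dsimp only
      rw [if_pos hi, ← h0]
      congr 1
      exact Fin.ext hi.symm
    · dsimp only
      rw [if_neg hi]
      have hv := i.isLt
      rw [dif_pos (by omega : (i : ℕ) - 1 + 1 < k)]
      congr 1
      exact Fin.ext (by simp; omega)
  · rw [if_neg h0]
    have hlast : (fun i : Fin k => lam i + 1) ⟨k - 1, by omega⟩ ≠ 0 := by simp
    rw [if_neg hlast]
    funext i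
    simp

theorem dual_shift1 (hk : 1 ≤ k) (hkn : k < n) {lam : Fin k → ℕ}
    (h : SIsPart n k lam) :
    dualPart n k (seidelShift1 n k lam) = seidelDown n k (dualPart n k lam) := by
  obtain ⟨ha, hle⟩ := h
  have hk' : 0 < k := hk
  rw [seidelShift1, dif_pos hk', seidelDown, dif_pos hk']
  by_cases h0 : lam ⟨0, hk'⟩ = n - k
  · rw [if_pos h0]
    have hlast : dualPart n k lam ⟨k - 1, by omega⟩ = 0 := by
      dsimp only [dualPart]
      have he : (⟨k - 1 - ((⟨k - 1, by omega⟩ : Fin k) : ℕ), by omega⟩ : Fin k) = ⟨0, hk'⟩ :=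
        Fin.ext (by simp)
      rw [he, h0]
      omega
    rw [if_pos hlast]
    funext i
    have hv := i.isLt
    dsimp only [dualPart]
    by_cases hi : (i : ℕ) = 0
    · rw [if_pos hi]
      rw [dif_neg (by omega : ¬ (k - 1 - (i : ℕ)) + 1 < k)]
      omega
    · rw [if_neg hi]
      rw [dif_pos (by omega : (k - 1 - (i : ℕ)) + 1 < k)]
      congr 2
      exact Fin.ext (by simp; omega)
  · rw [if_neg h0]
    have h0' : lam ⟨0, hk'⟩ < n - k := lt_of_le_of_ne (hle _) h0
    have hlast : dualPart n k lam ⟨k - 1, by omega⟩ ≠ 0 := by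
      dsimp only [dualPart]
      have he : (⟨k - 1 - ((⟨k - 1, by omega⟩ : Fin k) : ℕ), by omega⟩ : Fin k) = ⟨0, hk'⟩ :=
        Fin.ext (by simp)
      rw [he]
      omega
    rw [if_neg hlast]
    funext i
    dsimp only [dualPart]
    have hb : lam ⟨k - 1 - (i : ℕ), by have := i.isLt; omega⟩ ≤ lam ⟨0, hk'⟩ := by
      apply ha; simp [Fin.le_def]
    omega

/-- Rotation by one step on `{0, …, n-1}`. -/
def rot (n : ℕ) (x : ℕ) : ℕ := (x + 1) % n

/-- Encode a partition as the finset `{λ_i + (k-1-i)}` of `{0,…,n-1}`. -/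
def encode (k : ℕ) (lam : Fin k → ℕ) : Finset ℕ :=
  Finset.image (fun i : Fin k => lam i + (k - 1 - (i : ℕ))) Finset.univ

theorem encF_strictAnti {lam : Fin k → ℕ} (ha : Antitone lam) :
    ∀ i j : Fin k, i < j →
      lam j + (k - 1 - (j : ℕ)) < lam i + (k - 1 - (i : ℕ)) := by
  intro i j hij
  have h1 : lam j ≤ lam i := ha (le_of_lt hij)
  have hij' : (i : ℕ) < (j : ℕ) := hij
  have := j.isLt
  omega

theorem encF_inj {lam : Fin k → ℕ} (ha : Antitone lam) :
    Function.Injective (fun i : Fin k => lam i + (k - 1 - (i : ℕ))) := by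
  intro a b hab
  dsimp only at hab
  by_contra hne
  rcases lt_or_gt_of_ne hne with h | h
  · exact absurd hab (by have := encF_strictAnti ha a b h; omega)
  · exact absurd hab (by have := encF_strictAnti ha b a h; omega)

theorem encode_card {lam : Fin k → ℕ} (ha : Antitone lam) : (encode k lam).card = k := by
  rw [encode, Finset.card_image_of_injective _ (encF_inj ha), Finset.card_univ,
    Fintype.card_fin]

theorem encode_mem_lt (hk : 1 ≤ k) (hkn : k < n) {lam : Fin k → ℕ}
    (hle : ∀ i, lam i ≤ n - k) : ∀ x ∈ encode k lam, x < n := by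
  intro x hx
  simp only [encode, Finset.mem_image, Finset.mem_univ, true_and] at hx
  obtain ⟨i, rfl⟩ := hx
  have := hle i
  have := i.isLt
  omega

theorem encode_inj {lam mu : Fin k → ℕ}
    (hla : Antitone lam) (hma : Antitone mu)
    (henc : encode k lam = encode k mu) : lam = mu := by
  set F : Fin k → ℕ := fun i => lam i.rev + (k - 1 - ((i.rev : Fin k) : ℕ)) with hF
  set G : Fin k → ℕ := fun i => mu i.rev + (k - 1 - ((i.rev : Fin k) : ℕ)) with hG
  have hFmono : StrictMono F := fun i j hij =>
    encF_strictAnti hla j.rev i.rev (by rwa [Fin.rev_lt_rev])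
  have hGmono : StrictMono G := fun i j hij =>
    encF_strictAnti hma j.rev i.rev (by rwa [Fin.rev_lt_rev])
  have hcard : (encode k lam).card = k := encode_card hla
  have hFmem : ∀ x, F x ∈ encode k lam := by
    intro x
    simp only [hF, encode, Finset.mem_image, Finset.mem_univ, true_and]
    exact ⟨x.rev, rfl⟩
  have hGmem : ∀ x, G x ∈ encode k lam := by
    intro x
    rw [henc]
    simp only [hG, encode, Finset.mem_image, Finset.mem_univ, true_and]
    exact ⟨x.rev, rfl⟩
  have h1 : F = ⇑((encode k lam).orderEmbOfFin hcard) :=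
    Finset.orderEmbOfFin_unique hcard hFmem hFmono
  have h2 : G = ⇑((encode k lam).orderEmbOfFin hcard) :=
    Finset.orderEmbOfFin_unique hcard hGmem hGmono
  have hFG : F = G := h1.trans h2.symm
  funext i
  have := congrFun hFG i.rev
  simp only [hF, hG, Fin.rev_rev] at this
  omega

theorem encode_shift1 (hk : 1 ≤ k) (hkn : k < n) {lam : Fin k → ℕ}
    (h : SIsPart n k lam) :
    encode k (seidelShift1 n k lam) = (encode k lam).image (rot n) := by
  obtain ⟨ha, hle⟩ := h
  have hk' : 0 < k := hk
  rw [encode, encode, Finset.image_image]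
  rw [seidelShift1, dif_pos hk']
  by_cases h0 : lam ⟨0, hk'⟩ = n - k
  · rw [if_pos h0]
    ext x
    simp only [Finset.mem_image, Finset.mem_univ, true_and, Function.comp_apply]
    constructor
    · rintro ⟨i, rfl⟩
      have hv := i.isLt
      by_cases hi : (i : ℕ) + 1 < k
      · refine ⟨⟨(i : ℕ) + 1, hi⟩, ?_⟩
        rw [dif_pos hi]
        simp only [Fin.val_mk, rot]
        have hb := hle ⟨(i : ℕ) + 1, hi⟩
        rw [Nat.mod_eq_of_lt (by omega)]
        omega
      · refine ⟨⟨0, hk'⟩, ?_⟩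
        rw [dif_neg hi]
        simp only [Fin.val_mk, rot]
        rw [h0]
        have hmod : n - k + (k - 1 - 0) + 1 = n := by omega
        rw [hmod, Nat.mod_self]
        omega
    · rintro ⟨j, rfl⟩
      have hv := j.isLt
      by_cases hj : (j : ℕ) = 0
      · refine ⟨⟨k - 1, by omega⟩, ?_⟩
        simp only [Fin.val_mk, rot]
        rw [dif_neg (by omega)]
        have hje : j = ⟨0, hk'⟩ := Fin.ext hj
        rw [hje, h0]
        simp only [Fin.val_mk]
        have hmod : n - k + (k - 1 - 0) + 1 = n := by omega
        rw [hmod, Nat.mod_self]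
        omega
      · refine ⟨⟨(j : ℕ) - 1, by omega⟩, ?_⟩
        simp only [Fin.val_mk, rot]
        have hcond : (j : ℕ) - 1 + 1 < k := by omega
        rw [dif_pos hcond]
        rw [show (⟨(j : ℕ) - 1 + 1, hcond⟩ : Fin k) = j from
          Fin.ext (by simp only [Fin.val_mk]; omega)]
        have hb := hle j
        rw [Nat.mod_eq_of_lt (by omega)]
        omega
  · rw [if_neg h0]
    have h0' : lam ⟨0, hk'⟩ < n - k := lt_of_le_of_ne (hle _) h0
    apply Finset.image_congr
    intro i _
    dsimp only [rot, Function.comp_apply]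
    have hb : lam i ≤ lam ⟨0, hk'⟩ := ha (by simp [Fin.le_def])
    have hv := i.isLt
    rw [Nat.mod_eq_of_lt (by omega)]
    omega

theorem encode_shift (hk : 1 ≤ k) (hkn : k < n) {lam : Fin k → ℕ}
    (h : SIsPart n k lam) (p : ℕ) :
    encode k (seidelShift n k p lam) = (encode k lam).image ((rot n)^[p]) := by
  induction p with
  | zero => simp [seidelShift]
  | succ p ih =>
      have hstep : seidelShift n k (p + 1) lam = seidelShift1 n k (seidelShift n k p lam) := by
        rw [seidelShift, Function.iterate_succ', Function.comp_apply]; rfl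
      rw [hstep, encode_shift1 hk hkn (isPart_shift hk hkn h p), ih, Finset.image_image]
      congr 1
      funext x
      rw [Function.comp_apply, ← Function.iterate_succ_apply' (rot n) p x]

theorem rot_iterate (hn : 1 < n) (p : ℕ) {x : ℕ} (hx : x < n) :
    (rot n)^[p] x = (x + p) % n := by
  induction p with
  | zero => simp [Nat.mod_eq_of_lt hx]
  | succ p ih =>
      rw [Function.iterate_succ_apply', ih, rot]
      rw [show x + (p + 1) = x + p + 1 from rfl, Nat.add_mod (x + p) 1 n,
        Nat.mod_eq_of_lt (by omega : 1 < n)]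

theorem shift_period (hk : 1 ≤ k) (hkn : k < n) {lam : Fin k → ℕ}
    (h : SIsPart n k lam) : seidelShift n k n lam = lam := by
  have hpart := isPart_shift hk hkn h n
  apply encode_inj hpart.1 h.1
  rw [encode_shift hk hkn h n]
  have : ∀ x ∈ encode k lam, (rot n)^[n] x = x := by
    intro x hx
    have hxlt := encode_mem_lt hk hkn h.2 x hx
    rw [rot_iterate (by omega) n hxlt, Nat.add_mod_right, Nat.mod_eq_of_lt hxlt]
  calc (encode k lam).image ((rot n)^[n]) = (encode k lam).image id :=
        Finset.image_congr this
    _ = encode k lam := Finset.image_id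

end SeidelAux

open SeidelAux in
/-- For any partition `λ ∈ P_{k,n}` and `0 ≤ p ≤ n`,
`(λ↑p)^∨ = λ^∨ ↑ (n-p)`. -/
theorem dual_seidelShift (n k : ℕ) (hk : 1 ≤ k) (hkn : k < n)
    (lam : Fin k → ℕ) (hanti : Antitone lam) (hle : ∀ i, lam i ≤ n - k)
    (p : ℕ) (hp : p ≤ n) :
    dualPart n k (seidelShift n k p lam) = seidelShift n k (n - p) (dualPart n k lam) := by
  have hpart : SIsPart n k lam := ⟨hanti, hle⟩
  have hdual := isPart_dual hk hkn hpart
  induction p with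
  | zero =>
      simp only [Nat.sub_zero]
      rw [shift_period hk hkn hdual]
      rfl
  | succ p ih =>
      have hp' : p ≤ n := by omega
      have ihp := ih hp'
      have hstep : seidelShift n k (p + 1) lam = seidelShift1 n k (seidelShift n k p lam) := by
        rw [seidelShift, Function.iterate_succ', Function.comp_apply]; rfl
      rw [hstep, dual_shift1 hk hkn (isPart_shift hk hkn hpart p), ihp]
      have hsplit : n - p = (n - (p + 1)) + 1 := by omega
      rw [hsplit]
      have hstep2 : seidelShift n k (n - (p + 1) + 1) (dualPart n k lam)
          = seidelShift1 n k (seidelShift n k (n - (p + 1)) (dualPart n k lam)) := by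
        rw [seidelShift, Function.iterate_succ', Function.comp_apply]; rfl
      rw [hstep2, down_shift1 hk hkn (isPart_shift hk hkn hdual _)]
end

section
/- For any partition λ in P_{k,n}, the n-th Seidel shift returns to the original partition: λ↑n = λ. -/
section aux
variable (n k : ℕ)

def sencode (lam : Fin k → ℕ) : Fin k → ZMod n :=
  fun i => ((lam i + (k - 1 - (i : ℕ)) : ℕ) : ZMod n)

def sValid (lam : Fin k → ℕ) : Prop := Antitone lam ∧ ∀ i, lam i ≤ n - k

theorem scast_add_one {a b : ℕ} (h : a = b + 1) : (a : ZMod n) = (b : ZMod n) + 1 := by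
  subst h; push_cast; ring

theorem scast_wrap (hn : 1 ≤ n) {a b : ℕ} (ha : a = n - 1) (hb : b = 0) :
    (a : ZMod n) + 1 = (b : ZMod n) := by
  subst ha hb
  have h2 : ((n - 1 : ℕ) : ZMod n) + ((1 : ℕ) : ZMod n) = ((n - 1 + 1 : ℕ) : ZMod n) :=
    (Nat.cast_add _ _).symm
  rw [Nat.cast_one] at h2
  rw [h2, show n - 1 + 1 = n from by omega, ZMod.natCast_self, Nat.cast_zero]

theorem sValid_shift1 (hk : 1 ≤ k) (hkn : k < n) (lam : Fin k → ℕ)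
    (h : sValid n k lam) : sValid n k (seidelShift1 n k lam) := by
  obtain ⟨hanti, hle⟩ := h
  have hk0 : 0 < k := by omega
  unfold seidelShift1
  rw [dif_pos hk0]
  split_ifs with h0
  · constructor
    · intro i j hij
      dsimp only
      split_ifs with hj hi hi
      · exact hanti (Fin.mk_le_mk.mpr (by have : (i : ℕ) ≤ j := hij; omega))
      · omega
      · exact Nat.zero_le _
      · exact le_refl 0
    · intro i; dsimp only; split_ifs
      · exact hle _
      · exact Nat.zero_le _
  · have h1 : ∀ i : Fin k, lam i < n - k := by
      intro i
      have h2 : lam i ≤ lam ⟨0, hk0⟩ := hanti (by simp [Fin.le_def])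
      have h3 := hle ⟨0, hk0⟩
      have h0' : lam ⟨0, hk0⟩ ≠ n - k := h0
      omega
    exact ⟨fun i j hij => by simpa using Nat.add_le_add_right (hanti hij) 1,
      fun i => h1 i⟩

theorem srotate (hk : 1 ≤ k) (hkn : k < n) (lam : Fin k → ℕ)
    (h : sValid n k lam) :
    Set.range (sencode n k (seidelShift1 n k lam))
      = (fun c => c + 1) '' Set.range (sencode n k lam) := by
  obtain ⟨hanti, hle⟩ := h
  have hk0 : 0 < k := by omega
  unfold seidelShift1
  rw [dif_pos hk0]
  split_ifs with h0
  · -- rotation case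
    have h0' : lam ⟨0, hk0⟩ = n - k := h0
    ext c
    simp only [Set.mem_range, Set.mem_image, sencode]
    constructor
    · rintro ⟨i, rfl⟩
      by_cases hi : (i : ℕ) + 1 < k
      · refine ⟨_, ⟨⟨(i : ℕ) + 1, hi⟩, rfl⟩, ?_⟩
        rw [dif_pos hi]
        refine (scast_add_one n ?_).symm
        simp only [Fin.val_mk]
        omega
      · refine ⟨_, ⟨⟨0, hk0⟩, rfl⟩, ?_⟩
        rw [dif_neg hi]
        refine scast_wrap n (by omega) ?_ ?_
        · simp only [Fin.val_mk]
          have hi' := i.isLt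
          omega
        · have hi' := i.isLt
          omega
    · rintro ⟨_, ⟨j, rfl⟩, rfl⟩
      by_cases hj : (j : ℕ) = 0
      · refine ⟨⟨k - 1, by omega⟩, ?_⟩
        rw [dif_neg (by simp only [Fin.val_mk]; omega)]
        have hj0 : j = ⟨0, hk0⟩ := by ext; exact hj
        rw [hj0]
        refine (scast_wrap n (by omega) ?_ ?_).symm
        · simp only [Fin.val_mk]
          omega
        · simp only [Fin.val_mk]
          omega
      · refine ⟨⟨(j : ℕ) - 1, by have := j.isLt; omega⟩, ?_⟩
        rw [dif_pos (by simp only [Fin.val_mk]; have := j.isLt; omega)]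
        have hjj : (⟨(j : ℕ) - 1 + 1, by have := j.isLt; omega⟩ : Fin k) = j := by
          ext; simp only [Fin.val_mk]; omega
        rw [hjj]
        refine scast_add_one n ?_
        simp only [Fin.val_mk]
        have := j.isLt
        omega
  · -- add one case
    ext c
    simp only [Set.mem_range, Set.mem_image, sencode]
    constructor
    · rintro ⟨i, rfl⟩
      exact ⟨_, ⟨i, rfl⟩, (scast_add_one n (by omega)).symm⟩
    · rintro ⟨_, ⟨j, rfl⟩, rfl⟩
      exact ⟨j, scast_add_one n (by omega)⟩

theorem sinj (hk : 1 ≤ k) (hkn : k < n) (lam mu : Fin k → ℕ)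
    (hl : sValid n k lam) (hm : sValid n k mu)
    (h : Set.range (sencode n k lam) = Set.range (sencode n k mu)) :
    lam = mu := by
  set f : Fin k → ℕ := fun i => lam i + (k - 1 - (i : ℕ)) with hf
  set g : Fin k → ℕ := fun i => mu i + (k - 1 - (i : ℕ)) with hg
  have hfb : ∀ i, f i < n := fun i => by
    have := hl.2 i; have := i.isLt; simp only [hf]; omega
  have hgb : ∀ i, g i < n := fun i => by
    have := hm.2 i; have := i.isLt; simp only [hg]; omega
  have hcast : ∀ a b : ℕ, a < n → b < n → ((a : ZMod n) = b) → a = b := by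
    intro a b ha hb hab
    have : NeZero n := ⟨by omega⟩
    have := congrArg ZMod.val hab
    rwa [ZMod.val_natCast_of_lt ha, ZMod.val_natCast_of_lt hb] at this
  have hrange : Set.range f = Set.range g := by
    ext x
    constructor
    · rintro ⟨i, rfl⟩
      have : (↑(f i) : ZMod n) ∈ Set.range (sencode n k mu) := by
        rw [← h]; exact ⟨i, rfl⟩
      obtain ⟨j, hj⟩ := this
      exact ⟨j, hcast _ _ (hgb j) (hfb i) hj⟩
    · rintro ⟨i, rfl⟩
      have : (↑(g i) : ZMod n) ∈ Set.range (sencode n k lam) := by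
        rw [h]; exact ⟨i, rfl⟩
      obtain ⟨j, hj⟩ := this
      exact ⟨j, hcast _ _ (hfb j) (hgb i) hj⟩
  have hfa : StrictAnti f := by
    intro i j hij
    have h1 := hl.1 hij.le
    have h2 := j.isLt
    have h3 : (i : ℕ) < j := hij
    simp only [hf]
    omega
  have hga : StrictAnti g := by
    intro i j hij
    have h1 := hm.1 hij.le
    have h2 := j.isLt
    have h3 : (i : ℕ) < j := hij
    simp only [hg]
    omega
  have hfg : f = g := (hfa.range_inj hga).1 hrange
  funext i
  have := congrFun hfg i
  simp only [hf, hg] at this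
  omega

end aux

/-- For any partition `λ ∈ P_{k,n}`, `λ↑n = λ`. -/
theorem seidelShift_n_eq_self (n k : ℕ) (hk : 1 ≤ k) (hkn : k < n)
    (lam : Fin k → ℕ) (hanti : Antitone lam) (hle : ∀ i, lam i ≤ n - k) :
    seidelShift n k n lam = lam := by
  have key : ∀ p : ℕ, sValid n k (seidelShift n k p lam) ∧
      Set.range (sencode n k (seidelShift n k p lam))
        = (fun c => c + (p : ZMod n)) '' Set.range (sencode n k lam) := by
    intro p
    induction p with
    | zero => exact ⟨⟨hanti, hle⟩, by simp [seidelShift]⟩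
    | succ p ih =>
      obtain ⟨hv, hr⟩ := ih
      have hstep : seidelShift n k (p+1) lam = seidelShift1 n k (seidelShift n k p lam) := by
        simp [seidelShift, Function.iterate_succ_apply']
      constructor
      · rw [hstep]; exact sValid_shift1 n k hk hkn _ hv
      · rw [hstep, srotate n k hk hkn _ hv, hr, ← Set.image_comp]
        have hcomp : ((fun c => c + 1) ∘ fun c : ZMod n => c + (p : ℕ))
            = fun c : ZMod n => c + ((p + 1 : ℕ) : ZMod n) := by
          funext c
          show c + (p : ℕ) + 1 = c + ((p + 1 : ℕ) : ZMod n)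
          push_cast
          ring
        rw [hcomp]
  obtain ⟨hv, hr⟩ := key n
  apply sinj n k hk hkn _ _ hv ⟨hanti, hle⟩
  rw [hr, ZMod.natCast_self]
  simp
end

section
/- For any partition λ in P_{k,n}, the jump set of the first Seidel shift is obtained by subtracting 1 modulo n from each element of the jump set of λ: I_{λ↑1} = I_λ − 1, where I − 1 denotes the unique k-element subset {b_j} of {1,…,n} with b_j ≡ a_j − 1 (mod n) for all j when I = {a_j}. -/
/-- The jump set `I_λ = {n-k+j-λ_j : 1 ≤ j ≤ k} ⊆ {1, …, n}` of a partition. -/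
def jumpSet (n k : ℕ) (lam : Fin k → ℕ) : Finset ℕ :=
  Finset.univ.image (fun j : Fin k => n - k + ((j : ℕ) + 1) - lam j)

/-- `I_{λ↑1} = I_λ - 1`, where subtracting `1` from a subset of
`{1, …, n}` is done modulo `n` (each element `a` becomes `a-1`, except `1 ↦ n`). -/
theorem jumpSet_seidelShift1 (n k : ℕ) (hk : 1 ≤ k) (hkn : k < n)
    (lam : Fin k → ℕ) (hanti : Antitone lam) (hle : ∀ i, lam i ≤ n - k) :
    jumpSet n k (seidelShift1 n k lam) =
      (jumpSet n k lam).image (fun a => if a = 1 then n else a - 1) := by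
  have hk0 : 0 < k := hk
  unfold jumpSet seidelShift1
  rw [dif_pos hk0, Finset.image_image]
  by_cases h0 : lam ⟨0, hk0⟩ = n - k
  · rw [if_pos h0]
    ext a
    simp only [Finset.mem_image, Finset.mem_univ, true_and, Function.comp_apply]
    constructor
    · rintro ⟨j, rfl⟩
      by_cases h : (j : ℕ) + 1 < k
      · refine ⟨⟨(j : ℕ) + 1, h⟩, ?_⟩
        rw [dif_pos h]
        have h1 := hle ⟨(j : ℕ) + 1, h⟩
        have : n - k + ((j : ℕ) + 1 + 1) - lam ⟨(j : ℕ) + 1, h⟩ ≠ 1 := by omega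
        rw [if_neg this]
        simp only [Fin.val_mk]
        omega
      · refine ⟨⟨0, hk0⟩, ?_⟩
        rw [dif_neg h, h0]
        have hj := j.isLt
        have : n - k + (0 + 1) - (n - k) = 1 := by omega
        rw [this, if_pos rfl]
        omega
    · rintro ⟨j, rfl⟩
      by_cases hj0 : (j : ℕ) = 0
      · refine ⟨⟨k - 1, by omega⟩, ?_⟩
        have hj : j = ⟨0, hk0⟩ := Fin.ext hj0
        rw [hj, h0]
        have h : ¬ ((k - 1 : ℕ) + 1 < k) := by omega
        rw [dif_neg h]
        have : n - k + (0 + 1) - (n - k) = 1 := by omega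
        rw [this, if_pos rfl]
        simp only [Fin.val_mk]
        omega
      · refine ⟨⟨(j : ℕ) - 1, by have := j.isLt; omega⟩, ?_⟩
        have h : ((j : ℕ) - 1) + 1 < k := by have := j.isLt; omega
        rw [dif_pos h]
        have hj : (⟨((j : ℕ) - 1) + 1, h⟩ : Fin k) = j := Fin.ext (by simp only [Fin.val_mk]; omega)
        rw [hj]
        have h1 := hle j
        have : n - k + ((j : ℕ) + 1) - lam j ≠ 1 := by omega
        rw [if_neg this]
        simp only [Fin.val_mk]
        omega
  · rw [if_neg h0]
    apply Finset.image_congr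
    intro j _
    simp only [Function.comp_apply]
    have h1 := hle j
    have hne : n - k + ((j : ℕ) + 1) - lam j ≠ 1 := by
      intro h
      have hj0 : (j : ℕ) = 0 := by omega
      have : j = ⟨0, hk0⟩ := Fin.ext hj0
      rw [this] at h
      omega
    rw [if_neg hne]
    omega
end

section
/- For any partition λ in P_{k,n} and any integer r with 0 ≤ r ≤ n, the quantity |λ| − |λ↑r| + rk is divisible by n, and (rk + |λ| − |λ↑r|)/n is a nonnegative integer at most min(k, r). -/
/-!
Write `s_i = λ_i + (k - 1 - i)` (indices from `0`): these are `k` distinct positions in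
`{0, …, n-1}`, and the Seidel shift rotates this subset of `ℤ/n` by one step. A step that
does not wrap adds `1` to every part, so `|λ|` grows by `k`; the wrapping step removes
`λ_0 = n - k` and moves the other parts up, so `|λ|` grows by `k - n`. After `r` shifts,
`|λ↑r| = |λ| + rk - nd` where `d` counts the positions with `s_i + r ≥ n`; there are at most
`k` of them, and at most `r` because `s_i ≤ n - 1 - i`.
-/

open Finset

def dropCount (n k r : ℕ) (lam : Fin k → ℕ) : ℕ :=
  #{i | n ≤ lam i + (k - 1 - i) + r}

theorem dropCount_zero {n k : ℕ} {lam : Fin k → ℕ} (hkn : k ≤ n) (hle : ∀ i, lam i ≤ n - k) :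
    dropCount n k 0 lam = 0 := by
  refine card_eq_zero.2 (filter_eq_empty_iff.2 fun i _ => ?_)
  have := hle i
  omega

theorem dropCount_le_min {n k r : ℕ} {lam : Fin k → ℕ} (hkn : k ≤ n) (hle : ∀ i, lam i ≤ n - k) :
    dropCount n k r lam ≤ min k r := by
  rw [← Fin.card_filter_val_lt]
  refine card_le_card (monotone_filter_right _ fun i hi => ?_)
  have := hle i
  omega

theorem seidelShift_succ (n k r : ℕ) (lam : Fin k → ℕ) :
    seidelShift n k (r + 1) lam = seidelShift n k r (seidelShift1 n k lam) :=
  Function.iterate_succ_apply _ _ _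

section
variable {n m : ℕ} {lam : Fin (m + 1) → ℕ}

theorem seidelShift1_of_eq (h : lam 0 = n - (m + 1)) :
    seidelShift1 n (m + 1) lam = Fin.snoc (Fin.tail lam) 0 := by
  have h' : lam ⟨0, m.succ_pos⟩ = n - (m + 1) := h
  funext i
  simp only [seidelShift1, dif_pos m.succ_pos, if_pos h', Fin.snoc, Fin.tail]
  split_ifs <;> first | rfl | omega

theorem seidelShift1_of_ne (h : lam 0 ≠ n - (m + 1)) :
    seidelShift1 n (m + 1) lam = fun i => lam i + 1 := by
  have h' : lam ⟨0, m.succ_pos⟩ ≠ n - (m + 1) := h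
  simp only [seidelShift1, dif_pos m.succ_pos, if_neg h']

theorem Antitone.seidelShift1 (hanti : Antitone lam) :
    Antitone (seidelShift1 n (m + 1) lam) := by
  by_cases h : lam 0 = n - (m + 1)
  · rw [seidelShift1_of_eq h]
    intro i j hij
    induction j using Fin.lastCases with
    | last => simp
    | cast j =>
      induction i using Fin.lastCases with
      | last => exact absurd hij (not_le.2 (Fin.castSucc_lt_last j))
      | cast i => simpa [Fin.tail] using hanti (Fin.succ_le_succ_iff.2 hij)
  · rw [seidelShift1_of_ne h]
    exact fun i j hij => Nat.add_le_add_right (hanti hij) 1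

theorem seidelShift1_le (hanti : Antitone lam) (hle : ∀ i, lam i ≤ n - (m + 1))
    (i : Fin (m + 1)) :
    seidelShift1 n (m + 1) lam i ≤ n - (m + 1) := by
  by_cases h : lam 0 = n - (m + 1)
  · rw [seidelShift1_of_eq h]
    induction i using Fin.lastCases with
    | last => simp
    | cast i => simpa [Fin.tail] using hle i.succ
  · rw [seidelShift1_of_ne h]
    have := hanti (Fin.zero_le i)
    have := hle 0
    dsimp only
    omega

theorem sum_seidelShift1 (hkn : m + 1 ≤ n) :
    ∑ i, (seidelShift1 n (m + 1) lam i : ℤ) =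
      ∑ i, (lam i : ℤ) + (m + 1) - n * (if lam 0 = n - (m + 1) then 1 else 0) := by
  by_cases h : lam 0 = n - (m + 1)
  · simp only [seidelShift1_of_eq h, Fin.sum_univ_castSucc, Fin.snoc_castSucc, Fin.snoc_last,
      Fin.sum_univ_succ (f := fun i => (lam i : ℤ)), Fin.tail, h, if_true]
    push_cast [hkn]
    ring
  · simp [seidelShift1_of_ne h, h, sum_add_distrib]

theorem dropCount_succ {r : ℕ} (hr : r < n) :
    dropCount n (m + 1) (r + 1) lam =
      dropCount n (m + 1) r (seidelShift1 n (m + 1) lam) +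
        if lam 0 = n - (m + 1) then 1 else 0 := by
  by_cases h : lam 0 = n - (m + 1)
  · rw [dropCount, dropCount, card_filter, card_filter, Fin.sum_univ_succ,
      Fin.sum_univ_castSucc, seidelShift1_of_eq h]
    simp only [Fin.snoc_castSucc, Fin.snoc_last, Fin.tail, h, if_true, Fin.val_zero, Fin.val_succ,
      Fin.val_castSucc, Fin.val_last]
    rw [if_pos (by omega), if_neg (by omega), add_comm]
    congr 1
    refine sum_congr rfl fun i _ => if_congr ?_ rfl rfl
    omega
  · simp only [dropCount, seidelShift1_of_ne h, h, if_false, add_zero]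
    congr 1
    refine filter_congr fun i _ => ?_
    omega

theorem sum_seidelShift (hkn : m + 1 ≤ n) {r : ℕ} (hr : r ≤ n)
    (hanti : Antitone lam) (hle : ∀ i, lam i ≤ n - (m + 1)) :
    ∑ i, (seidelShift n (m + 1) r lam i : ℤ) =
      ∑ i, (lam i : ℤ) + r * (m + 1) - n * dropCount n (m + 1) r lam := by
  induction r generalizing lam with
  | zero => simp [seidelShift, dropCount_zero hkn hle]
  | succ r ih =>
    rw [seidelShift_succ, ih (by omega) hanti.seidelShift1 (seidelShift1_le hanti hle),
      sum_seidelShift1 hkn, dropCount_succ (by omega)]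
    push_cast
    ring

end

/-- For `0 ≤ r ≤ n`, `n` divides `rk + |λ| - |λ↑r|` and the
quotient is a nonnegative integer at most `min k r`. -/
theorem seidelShift_power (n k : ℕ) (hk : 1 ≤ k) (hkn : k < n)
    (lam : Fin k → ℕ) (hanti : Antitone lam) (hle : ∀ i, lam i ≤ n - k)
    (r : ℕ) (hr : r ≤ n) :
    ∃ d : ℕ, d ≤ min k r ∧
      (d : ℤ) * n = (r : ℤ) * k + (∑ i, (lam i : ℤ)) -
        ∑ i, (seidelShift n k r lam i : ℤ) := by
  obtain ⟨m, rfl⟩ : ∃ m, k = m + 1 := ⟨k - 1, by omega⟩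
  refine ⟨dropCount n (m + 1) r lam, dropCount_le_min hkn.le hle, ?_⟩
  rw [sum_seidelShift hkn.le hr hanti hle]
  push_cast
  ring
end

section
/- Let λ, ν be partitions in P_{k,n} and 1 ≤ m ≤ k. Suppose ν_i ≥ λ_i for all 1 ≤ i < m and ν_m < λ_m. Then λ↑(n−k−λ_m+m) = (λ_{m+1}+n−k−λ_m, …, λ_k+n−k−λ_m, λ_1−λ_m, …, λ_{m−1}−λ_m, 0) and ν↑(n−k−λ_m+m) = (ν_m+n−k−λ_m+1, …, ν_k+n−k−λ_m+1, ν_1−λ_m+1, …, ν_{m−1}−λ_m+1). -/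
lemma fcongr {k : ℕ} (f : Fin k → ℕ) {a b : ℕ} (ha : a < k) (hb : b < k) (h : a = b) :
    f ⟨a, ha⟩ = f ⟨b, hb⟩ := by subst h; rfl

lemma shift_succ' (n k p : ℕ) (lam : Fin k → ℕ) :
    seidelShift n k (p+1) lam = seidelShift1 n k (seidelShift n k p lam) :=
  Function.iterate_succ_apply' _ _ _

lemma shift_add (n k a b : ℕ) (lam : Fin k → ℕ) :
    seidelShift n k (a + b) lam = seidelShift n k b (seidelShift n k a lam) := by
  unfold seidelShift
  rw [Nat.add_comm]
  exact Function.iterate_add_apply _ b a lam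

lemma shift_inc (n k p : ℕ) (hk : 0 < k) (lam : Fin k → ℕ)
    (h : lam ⟨0, hk⟩ + p ≤ n - k) :
    seidelShift n k p lam = fun i => lam i + p := by
  induction p with
  | zero => simp [seidelShift]
  | succ p ih =>
    rw [shift_succ', ih (by omega)]
    unfold seidelShift1
    rw [dif_pos hk, if_neg (by simp; omega)]
    funext i
    dsimp
    omega

lemma shift_cycle (n k : ℕ) (hk : 0 < k) (lam : Fin k → ℕ)
    (hle : lam ⟨0, hk⟩ ≤ n - k) :
    seidelShift n k (n - k - lam ⟨0, hk⟩ + 1) lam =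
      fun i : Fin k => if h : (i : ℕ) + 1 < k then lam ⟨(i : ℕ) + 1, h⟩ + (n - k - lam ⟨0, hk⟩) else 0 := by
  rw [shift_succ', shift_inc n k _ hk lam (by omega)]
  unfold seidelShift1
  rw [dif_pos hk, if_pos (by simp; omega)]

lemma lam_formula (n k : ℕ) :
    ∀ m : ℕ, ∀ hm : m < k, ∀ lam : Fin k → ℕ, Antitone lam → (∀ i, lam i ≤ n - k) →
    seidelShift n k (n - k - lam ⟨m, hm⟩ + (m + 1)) lam =
      fun j : Fin k =>
        if h : (j : ℕ) < k - (m + 1) then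
          lam ⟨(j : ℕ) + (m + 1), by omega⟩ + (n - k - lam ⟨m, hm⟩)
        else if h2 : (j : ℕ) < k - 1 then
          lam ⟨(j : ℕ) - (k - (m + 1)), by have := j.isLt; omega⟩ - lam ⟨m, hm⟩
        else 0 := by
  intro m
  induction m with
  | zero =>
    intro hm lam hanti hle
    rw [shift_cycle n k hm lam (hle _)]
    funext j
    have hjk := j.isLt
    by_cases h : (j : ℕ) + 1 < k
    · rw [dif_pos h, dif_pos (show (j : ℕ) < k - (0 + 1) by omega)]
    · rw [dif_neg h, dif_neg (show ¬ (j : ℕ) < k - (0 + 1) by omega),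
        dif_neg (show ¬ (j : ℕ) < k - 1 by omega)]
  | succ m ih =>
    intro hm lam hanti hle
    have hk : 0 < k := by omega
    have hm' : m < k := by omega
    have hle0 : lam ⟨0, hk⟩ ≤ n - k := hle _
    set lam' : Fin k → ℕ :=
      fun i : Fin k => if h : (i : ℕ) + 1 < k then lam ⟨(i : ℕ) + 1, h⟩ + (n - k - lam ⟨0, hk⟩) else 0 with hlam'
    have hcyc : seidelShift n k ((n - k - lam ⟨0, hk⟩) + 1) lam = lam' := shift_cycle n k hk lam hle0
    have hanti' : Antitone lam' := by
      intro a b hab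
      have hab' : (a : ℕ) ≤ (b : ℕ) := hab
      simp only [hlam']
      split_ifs with h1 h2 h2
      · have : lam ⟨(b:ℕ)+1, h1⟩ ≤ lam ⟨(a:ℕ)+1, h2⟩ := hanti (Fin.mk_le_mk.mpr (by omega))
        omega
      · omega
      · exact Nat.zero_le _
      · exact Nat.le_refl _
    have hle'' : ∀ i, lam' i ≤ n - k := by
      intro i
      simp only [hlam']
      split_ifs with h1
      · have : lam ⟨(i:ℕ)+1, h1⟩ ≤ lam ⟨0, hk⟩ := hanti (Fin.mk_le_mk.mpr (Nat.zero_le _))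
        omega
      · exact Nat.zero_le _
    have hmono : lam ⟨m+1, hm⟩ ≤ lam ⟨0, hk⟩ := hanti (Fin.mk_le_mk.mpr (Nat.zero_le _))
    have hlam'm : lam' ⟨m, hm'⟩ = lam ⟨m+1, hm⟩ + (n - k - lam ⟨0, hk⟩) := by
      simp only [hlam']
      rw [dif_pos hm]
    have hsplit : n - k - lam ⟨m+1, hm⟩ + (m + 1 + 1)
        = ((n - k - lam ⟨0, hk⟩) + 1) + (n - k - lam' ⟨m, hm'⟩ + (m + 1)) := by
      rw [hlam'm]
      omega
    rw [hsplit, shift_add, hcyc, ih hm' lam' hanti' hle'']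
    funext j
    have hjk := j.isLt
    rw [hlam'm]
    by_cases h1 : (j : ℕ) < k - (m + 1)
    · by_cases h2 : (j : ℕ) < k - (m + 1 + 1)
      · rw [dif_pos h1, dif_pos h2]
        have hb2 : ((j : ℕ) + (m + 1)) + 1 < k := by omega
        simp only [hlam']
        rw [dif_pos hb2]
        rw [fcongr lam hb2 (show (j:ℕ) + (m+1+1) < k by omega) (by omega)]
        omega
      · rw [dif_pos h1, dif_neg h2, dif_pos (show (j:ℕ) < k - 1 by omega)]
        simp only [hlam']
        rw [dif_neg (show ¬ ((j:ℕ) + (m+1)) + 1 < k by omega)]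
        rw [fcongr lam (show (j:ℕ) - (k - (m+1+1)) < k by omega) hk (by omega)]
        omega
    · by_cases h2 : (j : ℕ) < k - 1
      · rw [dif_neg h1, dif_neg (show ¬ (j:ℕ) < k - (m+1+1) by omega), dif_pos h2, dif_pos h2]
        have ht2 : ((j : ℕ) - (k - (m+1))) + 1 < k := by omega
        simp only [hlam']
        rw [dif_pos ht2]
        rw [fcongr lam ht2 (show (j:ℕ) - (k - (m+1+1)) < k by omega) (by omega)]
        omega
      · rw [dif_neg h1, dif_neg (show ¬ (j:ℕ) < k - (m+1+1) by omega), dif_neg h2, dif_neg h2]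

lemma nu_formula (n k : ℕ) :
    ∀ m : ℕ, ∀ _hm : m < k, ∀ L : ℕ, L ≤ n - k →
    ∀ nu : Fin k → ℕ, Antitone nu → (∀ i, nu i ≤ n - k) →
    (∀ i : Fin k, (i : ℕ) < m → L ≤ nu i) → (nu ⟨m, _hm⟩ < L) →
    seidelShift n k (n - k - L + (m + 1)) nu =
      fun j : Fin k =>
        if h : (j : ℕ) ≤ k - (m + 1) then
          nu ⟨(j : ℕ) + (m + 1) - 1, by have := j.isLt; omega⟩ + (n - k - L) + 1
        else
          nu ⟨(j : ℕ) - (k - (m + 1) + 1), by have := j.isLt; omega⟩ + 1 - L := by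
  intro m
  induction m with
  | zero =>
    intro hm L hL nu hanti hle _hge hlt
    rw [shift_inc n k _ hm nu (by have := hle ⟨0, hm⟩; omega)]
    funext j
    have hjk := j.isLt
    rw [dif_pos (show (j : ℕ) ≤ k - (0 + 1) by omega)]
    have e : nu ⟨(j : ℕ) + (0 + 1) - 1, by omega⟩ = nu j := congrArg nu (Fin.ext (by simp))
    omega
  | succ m ih =>
    intro hm L hL nu hanti hle hge hlt
    have hk : 0 < k := by omega
    have hm' : m < k := by omega
    have hle0 : nu ⟨0, hk⟩ ≤ n - k := hle _
    have hge0 : L ≤ nu ⟨0, hk⟩ := hge ⟨0, hk⟩ (by simp)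
    set nu' : Fin k → ℕ :=
      fun i : Fin k => if h : (i : ℕ) + 1 < k then nu ⟨(i : ℕ) + 1, h⟩ + (n - k - nu ⟨0, hk⟩) else 0 with hnu'
    have hcyc : seidelShift n k ((n - k - nu ⟨0, hk⟩) + 1) nu = nu' := shift_cycle n k hk nu hle0
    have hanti' : Antitone nu' := by
      intro a b hab
      have hab' : (a : ℕ) ≤ (b : ℕ) := hab
      simp only [hnu']
      split_ifs with h1 h2 h2
      · have : nu ⟨(b:ℕ)+1, h1⟩ ≤ nu ⟨(a:ℕ)+1, h2⟩ := hanti (Fin.mk_le_mk.mpr (by omega))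
        omega
      · omega
      · exact Nat.zero_le _
      · exact Nat.le_refl _
    have hle'' : ∀ i, nu' i ≤ n - k := by
      intro i
      simp only [hnu']
      split_ifs with h1
      · have : nu ⟨(i:ℕ)+1, h1⟩ ≤ nu ⟨0, hk⟩ := hanti (Fin.mk_le_mk.mpr (Nat.zero_le _))
        omega
      · exact Nat.zero_le _
    -- new L
    have hL' : (n - k - nu ⟨0, hk⟩) + L ≤ n - k := by omega
    have hge' : ∀ i : Fin k, (i : ℕ) < m → (n - k - nu ⟨0, hk⟩) + L ≤ nu' i := by
      intro i hi
      have hik := i.isLt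
      simp only [hnu']
      rw [dif_pos (show (i:ℕ) + 1 < k by omega)]
      have : L ≤ nu ⟨(i:ℕ)+1, by omega⟩ := hge _ (by simp; omega)
      omega
    have hlt' : nu' ⟨m, hm'⟩ < (n - k - nu ⟨0, hk⟩) + L := by
      simp only [hnu']
      rw [dif_pos hm]
      have : nu ⟨m+1, hm⟩ < L := hlt
      omega
    have hsplit : n - k - L + (m + 1 + 1)
        = ((n - k - nu ⟨0, hk⟩) + 1) + (n - k - ((n - k - nu ⟨0, hk⟩) + L) + (m + 1)) := by
      omega
    rw [hsplit, shift_add, hcyc, ih hm' _ hL' nu' hanti' hle'' hge' hlt']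
    funext j
    have hjk := j.isLt
    by_cases h1 : (j : ℕ) ≤ k - (m + 1)
    · by_cases h2 : (j : ℕ) ≤ k - (m + 1 + 1)
      · rw [dif_pos h1, dif_pos h2]
        have hb2 : ((j : ℕ) + (m + 1) - 1) + 1 < k := by omega
        simp only [hnu']
        rw [dif_pos hb2]
        rw [fcongr nu hb2 (show (j:ℕ) + (m+1+1) - 1 < k by omega) (by omega)]
        omega
      · rw [dif_pos h1, dif_neg h2]
        simp only [hnu']
        rw [dif_neg (show ¬ ((j:ℕ) + (m+1) - 1) + 1 < k by omega)]
        rw [fcongr nu (show (j:ℕ) - (k - (m+1+1) + 1) < k by omega) hk (by omega)]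
        omega
    · rw [dif_neg h1, dif_neg (show ¬ (j:ℕ) ≤ k - (m+1+1) by omega)]
      have ht2 : ((j : ℕ) - (k - (m+1) + 1)) + 1 < k := by omega
      simp only [hnu']
      rw [dif_pos ht2]
      rw [fcongr nu ht2 (show (j:ℕ) - (k - (m+1+1) + 1) < k by omega) (by omega)]
      have : L ≤ nu ⟨(j:ℕ) - (k - (m+1+1) + 1), by omega⟩ := hge _ (by simp; omega)
      omega


set_option maxHeartbeats 1000000 in
/-- (Lemma 6.4 of the paper.) If `ν_i ≥ λ_i` for `1 ≤ i < m`
and `ν_m < λ_m`, then `λ↑(n-k-λ_m+m)` and `ν↑(n-k-λ_m+m)` are given explicitly by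
`λ↑(n-k-λ_m+m) = (λ_{m+1}+n-k-λ_m, …, λ_k+n-k-λ_m, λ_1-λ_m, …, λ_{m-1}-λ_m, 0)` and
`ν↑(n-k-λ_m+m) = (ν_m+n-k-λ_m+1, …, ν_k+n-k-λ_m+1, ν_1-λ_m+1, …, ν_{m-1}-λ_m+1)`. -/
theorem seidelShift_formula (n k m : ℕ) (hk : 1 ≤ k) (hkn : k < n)
    (hm1 : 1 ≤ m) (hmk : m ≤ k)
    (lam : Fin k → ℕ) (hanti : Antitone lam) (hle : ∀ i, lam i ≤ n - k)
    (nu : Fin k → ℕ) (hanti' : Antitone nu) (hle' : ∀ i, nu i ≤ n - k)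
    (hge : ∀ i : Fin k, (i : ℕ) < m - 1 → lam i ≤ nu i)
    (hlt : nu ⟨m - 1, by omega⟩ < lam ⟨m - 1, by omega⟩) :
    (∀ j : Fin k,
      seidelShift n k (n - k - lam ⟨m - 1, by omega⟩ + m) lam j =
        if h : (j : ℕ) < k - m then
          lam ⟨(j : ℕ) + m, by omega⟩ + (n - k - lam ⟨m - 1, by omega⟩)
        else if h2 : (j : ℕ) < k - 1 then
          lam ⟨(j : ℕ) - (k - m), by have := j.isLt; omega⟩ - lam ⟨m - 1, by omega⟩
        else 0) ∧
    (∀ j : Fin k,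
      seidelShift n k (n - k - lam ⟨m - 1, by omega⟩ + m) nu j =
        if h : (j : ℕ) ≤ k - m then
          nu ⟨(j : ℕ) + m - 1, by omega⟩ + (n - k - lam ⟨m - 1, by omega⟩) + 1
        else
          nu ⟨(j : ℕ) - (k - m + 1), by have := j.isLt; omega⟩ + 1 -
            lam ⟨m - 1, by omega⟩) := by
  obtain ⟨m0, rfl⟩ : ∃ m0, m = m0 + 1 := ⟨m - 1, by omega⟩
  have hm0 : m0 < k := by omega
  simp only [Nat.add_sub_cancel] at hge hlt ⊢
  constructor
  · intro j
    rw [lam_formula n k m0 hm0 lam hanti hle]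
  · intro j
    have hge' : ∀ i : Fin k, (i : ℕ) < m0 → lam ⟨m0, hm0⟩ ≤ nu i := by
      intro i hi
      have h1 : lam ⟨m0, hm0⟩ ≤ lam i := hanti (by rw [Fin.le_def]; simp; omega)
      exact le_trans h1 (hge i hi)
    rw [nu_formula n k m0 hm0 (lam ⟨m0, hm0⟩) (hle _) nu hanti' hle' hge' hlt]
end

section
/- Let η ∈ P_{k,n} with η_1 = n−k, and let μ = η^∨ so that μ_k = 0. With F_• the standard flag and F_•^opp the opposite flag in ℂ^n, the intersection X^{n−k}(F_•) ∩ X_η(F_•^opp) = {V_k ∈ Gr(k,n) : dim V_k ∩ F_1 ≥ 1 and dim V_k ∩ F^opp_{j+η_{k−j+1}} ≥ j for 1 ≤ j ≤ k} equals {V_k : dim V_k ∩ F_1 ≥ 1 and dim V_k ∩ (F_1 + F^opp_{j+η_{k−j+1}}) ≥ j+1 for 1 ≤ j ≤ k−1}. -/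
/-- The standard flag: `F_i = span(e_1, …, e_i)` in `ℂ^n` (0-indexed basis). -/
noncomputable def stdFlag (n i : ℕ) : Submodule ℂ (Fin n → ℂ) :=
  Submodule.span ℂ {v | ∃ j : Fin n, (j : ℕ) < i ∧ v = Pi.single j 1}

/-- The opposite flag: `F_i^opp = span(e_n, …, e_{n-i+1})` in `ℂ^n`. -/
noncomputable def oppFlag (n i : ℕ) : Submodule ℂ (Fin n → ℂ) :=
  Submodule.span ℂ {v | ∃ j : Fin n, n - i ≤ (j : ℕ) ∧ v = Pi.single j 1}

lemma stdFlag_eq (n i : ℕ) :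
    stdFlag n i = Submodule.span ℂ
      ((fun j : Fin n => Pi.single j (1:ℂ)) '' {j | (j : ℕ) < i}) := by
  unfold stdFlag
  congr 1
  ext v
  simp [Set.mem_image, eq_comm, and_comm]

lemma oppFlag_eq (n i : ℕ) :
    oppFlag n i = Submodule.span ℂ
      ((fun j : Fin n => Pi.single j (1:ℂ)) '' {j | n - i ≤ (j : ℕ)}) := by
  unfold oppFlag
  congr 1
  ext v
  simp [Set.mem_image, eq_comm, and_comm]

lemma single_li (n : ℕ) :
    LinearIndependent ℂ (fun j : Fin n => Pi.single j (1:ℂ)) := by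
  have h := (Pi.basisFun ℂ (Fin n)).linearIndependent
  rwa [show ⇑(Pi.basisFun ℂ (Fin n)) = fun j : Fin n => Pi.single j (1:ℂ) from
    funext fun j => Pi.basisFun_apply ℂ (Fin n) j] at h

lemma oppFlag_top (n : ℕ) : oppFlag n n = ⊤ := by
  rw [oppFlag_eq]
  have h1 : {j : Fin n | n - n ≤ (j : ℕ)} = Set.univ := by ext j; simp
  rw [h1, Set.image_univ]
  have h2 := (Pi.basisFun ℂ (Fin n)).span_eq
  rwa [show ⇑(Pi.basisFun ℂ (Fin n)) = fun j : Fin n => Pi.single j (1:ℂ) from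
    funext fun j => Pi.basisFun_apply ℂ (Fin n) j] at h2

lemma stdFlag_one_eq (n : ℕ) (hn : 0 < n) :
    stdFlag n 1 = Submodule.span ℂ {Pi.single (⟨0, hn⟩ : Fin n) (1:ℂ)} := by
  rw [stdFlag_eq]
  congr 1
  ext v
  constructor
  · rintro ⟨j, hj, rfl⟩
    have : j = ⟨0, hn⟩ := by ext; simpa using hj
    simp [this]
  · rintro rfl
    exact ⟨⟨0, hn⟩, by simp, rfl⟩

lemma finrank_stdFlag_one (n : ℕ) (hn : 0 < n) :
    Module.finrank ℂ (stdFlag n 1) = 1 := by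
  rw [stdFlag_one_eq n hn]
  exact finrank_span_singleton (by
    intro h
    have := congrFun h ⟨0, hn⟩
    simp at this)

lemma disjoint_std_opp (n m : ℕ) (hm : m + 1 ≤ n) :
    Disjoint (stdFlag n 1) (oppFlag n m) := by
  rw [stdFlag_eq, oppFlag_eq]
  refine (single_li n).disjoint_span_image ?_
  rw [Set.disjoint_left]
  intro j hj hj'
  simp only [Set.mem_setOf_eq] at hj hj'
  omega

section DimLemmas
variable {K M : Type*} [Field K] [AddCommGroup M] [Module K M] [FiniteDimensional K M]

lemma dim_inf_add_le (W A B : Submodule K M) (h : Disjoint A B) :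
    Module.finrank K ↥(W ⊓ A) + Module.finrank K ↥(W ⊓ B) ≤
      Module.finrank K ↥(W ⊓ (A ⊔ B)) := by
  have hdisj : Disjoint (W ⊓ A) (W ⊓ B) := h.mono inf_le_right inf_le_right
  have key := Submodule.finrank_sup_add_finrank_inf_eq (W ⊓ A) (W ⊓ B)
  rw [hdisj.eq_bot, finrank_bot] at key
  have hfin : Module.finrank K ↥((W ⊓ A) ⊔ (W ⊓ B)) ≤
      Module.finrank K ↥(W ⊓ (A ⊔ B)) :=
    Submodule.finrank_mono
      (sup_le (inf_le_inf_left _ le_sup_left) (inf_le_inf_left _ le_sup_right))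
  omega

lemma dim_inf_sup_le (W A B : Submodule K M) (hA : Module.finrank K A = 1) :
    Module.finrank K ↥(W ⊓ (A ⊔ B)) ≤ Module.finrank K ↥(W ⊓ B) + 1 := by
  have key := Submodule.finrank_sup_add_finrank_inf_eq (W ⊓ (A ⊔ B)) B
  have hWinf : (W ⊓ (A ⊔ B)) ⊓ B = W ⊓ B := by
    rw [inf_assoc, inf_eq_right.mpr (le_sup_right : B ≤ A ⊔ B)]
  rw [hWinf] at key
  have hsup2 := Submodule.finrank_sup_add_finrank_inf_eq A B
  have hWle : Module.finrank K ↥((W ⊓ (A ⊔ B)) ⊔ B) ≤ Module.finrank K ↥(A ⊔ B) :=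
    Submodule.finrank_mono (sup_le inf_le_right le_sup_right)
  omega

end DimLemmas

set_option maxHeartbeats 1000000 in
/-- For `η ∈ P_{k,n}` with `η₁ = n-k`, a `k`-dimensional subspace
`V ≤ ℂ^n` satisfies `dim V ∩ F₁ ≥ 1` and `dim V ∩ F^opp_{j+η_{k-j+1}} ≥ j` for
`1 ≤ j ≤ k` iff it satisfies `dim V ∩ F₁ ≥ 1` and
`dim V ∩ (F₁ + F^opp_{j+η_{k-j+1}}) ≥ j+1` for `1 ≤ j ≤ k-1`. -/
theorem schubert_intersection_eq (n k : ℕ) (hk : 1 ≤ k) (hkn : k < n)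
    (eta : Fin k → ℕ) (hanti : Antitone eta) (hle : ∀ i, eta i ≤ n - k)
    (heta1 : eta ⟨0, by omega⟩ = n - k)
    (V : Submodule ℂ (Fin n → ℂ)) (hV : Module.finrank ℂ V = k) :
    (1 ≤ Module.finrank ℂ ↥(V ⊓ stdFlag n 1) ∧
      ∀ j : Fin k,
        (j : ℕ) + 1 ≤ Module.finrank ℂ
          ↥(V ⊓ oppFlag n ((j : ℕ) + 1 + eta ⟨k - 1 - (j : ℕ), by omega⟩))) ↔
    (1 ≤ Module.finrank ℂ ↥(V ⊓ stdFlag n 1) ∧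
      ∀ j : Fin k, (j : ℕ) + 1 ≤ k - 1 →
        (j : ℕ) + 2 ≤ Module.finrank ℂ
          ↥(V ⊓ (stdFlag n 1 ⊔
            oppFlag n ((j : ℕ) + 1 + eta ⟨k - 1 - (j : ℕ), by omega⟩)))) := by
  have hn : 0 < n := by omega
  constructor
  · rintro ⟨h1, h2⟩
    refine ⟨h1, fun j hj => ?_⟩
    have hmn : ((j : ℕ) + 1 + eta ⟨k - 1 - (j : ℕ), by omega⟩) + 1 ≤ n := by
      have := hle ⟨k - 1 - (j : ℕ), by omega⟩
      omega
    have key := dim_inf_add_le V (stdFlag n 1)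
      (oppFlag n ((j : ℕ) + 1 + eta ⟨k - 1 - (j : ℕ), by omega⟩))
      (disjoint_std_opp n _ hmn)
    have h2j := h2 j
    omega
  · rintro ⟨h1, h2⟩
    refine ⟨h1, fun j => ?_⟩
    by_cases hcase : (j : ℕ) + 1 ≤ k - 1
    · have h2j := h2 j hcase
      have key := dim_inf_sup_le V (stdFlag n 1)
        (oppFlag n ((j : ℕ) + 1 + eta ⟨k - 1 - (j : ℕ), by omega⟩))
        (finrank_stdFlag_one n hn)
      omega
    · have hj : (j : ℕ) = k - 1 := by have := j.isLt; omega
      have hidx : (⟨k - 1 - (j : ℕ), by omega⟩ : Fin k) = ⟨0, by omega⟩ := by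
        ext; simp; omega
      have harg : (j : ℕ) + 1 + eta ⟨k - 1 - (j : ℕ), by omega⟩ = n := by
        rw [hidx, heta1]; omega
      rw [harg, oppFlag_top, inf_top_eq, hV]
      omega
end

section
/- Let η ∈ P_{k,n} and 1 ≤ i ≤ n−k and 1 ≤ d < min(k+1, n−k). With F_•, F_•^opp the standard and opposite flags in ℂ^n, define RHS2 = {(V_{k−d} ≤ V_k ≤ V_{k+d}) : dim V_{k+d} ∩ F^opp_{s+η_{k−s+1}} ≥ s for 1 ≤ s ≤ k, and dim V_{k−d} ∩ F^opp_{j+η_{k−j+1}} ≥ j−d for d+1 ≤ j ≤ k}, and RHS1 = {(V_{k−d} ≤ V_k ≤ V_{k+d}) : there exists \bar V_k with V_{k−d} ≤ \bar V_k ≤ V_{k+d} and dim \bar V_k ∩ F^opp_{s+η_{k−s+1}} ≥ s for 1 ≤ s ≤ k}. Then RHS1 = RHS2. -/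
lemma oppFlag_mono (n : ℕ) : Monotone (oppFlag n) := by
  intro a b hab
  apply Submodule.span_mono
  rintro v ⟨j, hj, hv⟩
  exact ⟨j, le_trans (Nat.sub_le_sub_left hab n) hj, hv⟩

/-- The key construction, by induction on `d`: if `A ≤ C`, `dim A = k - d`,
`dim (C ⊓ G s) ≥ s+1` for all `s`, and `dim (A ⊓ G j) ≥ j+1-d` for `j ≥ d`,
then there is `W` with `A ≤ W ≤ C`, `dim W = k`, `dim (W ⊓ G s) ≥ s+1`. -/
lemma aux_key {V : Type*} [AddCommGroup V] [Module ℂ V] [FiniteDimensional ℂ V]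
    {k : ℕ} (G : Fin k → Submodule ℂ V) (hG : Monotone G) :
    ∀ d : ℕ, d ≤ k → ∀ A C : Submodule ℂ V, A ≤ C →
      Module.finrank ℂ A = k - d →
      (∀ s : Fin k, (s : ℕ) + 1 ≤ Module.finrank ℂ ↥(C ⊓ G s)) →
      (∀ j : Fin k, d ≤ (j : ℕ) → (j : ℕ) + 1 - d ≤ Module.finrank ℂ ↥(A ⊓ G j)) →
      ∃ W : Submodule ℂ V, A ≤ W ∧ W ≤ C ∧ Module.finrank ℂ W = k ∧
        ∀ s : Fin k, (s : ℕ) + 1 ≤ Module.finrank ℂ ↥(W ⊓ G s) := by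
  intro d
  induction d with
  | zero =>
    intro _ A C hAC hA hC hAG
    exact ⟨A, le_rfl, hAC, by simpa using hA, fun s => by simpa using hAG s (Nat.zero_le _)⟩
  | succ e ih =>
    intro hdk A C hAC hA hC hAG
    classical
    set S : Finset (Fin k) :=
      Finset.univ.filter (fun j => e ≤ (j : ℕ) ∧
        Module.finrank ℂ ↥(A ⊓ G j) ≤ (j : ℕ) - e) with hS
    have hk1 : 1 ≤ k := by omega
    obtain ⟨v, hvC, hvA, hvS⟩ :
        ∃ v, v ∈ C ∧ v ∉ A ∧ ∀ j ∈ S, v ∈ A ⊔ G j := by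
      by_cases hne : S.Nonempty
      · obtain ⟨j₀, hj₀S, hj₀min⟩ : ∃ j₀ ∈ S, ∀ j ∈ S, j₀ ≤ j :=
          ⟨S.min' hne, S.min'_mem hne, fun j hj => S.min'_le j hj⟩
        rw [hS, Finset.mem_filter] at hj₀S
        obtain ⟨-, hj0e, hj0a⟩ := hj₀S
        have hinf : A ⊓ (C ⊓ G j₀) = A ⊓ G j₀ := by
          rw [← inf_assoc, inf_eq_left.mpr hAC]
        have hdim := Submodule.finrank_sup_add_finrank_inf_eq A (C ⊓ G j₀)
        rw [hinf] at hdim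
        have hc := hC j₀
        have hAX : A < A ⊔ (C ⊓ G j₀) := by
          refine lt_of_le_of_ne le_sup_left (fun h => ?_)
          have hXA : Module.finrank ℂ ↥(A ⊔ (C ⊓ G j₀)) = Module.finrank ℂ A := by
            rw [← h]
          omega
        obtain ⟨v, hvX, hvA⟩ := SetLike.exists_of_lt hAX
        refine ⟨v, (sup_le hAC inf_le_left : A ⊔ (C ⊓ G j₀) ≤ C) hvX, hvA,
          fun j hj => ?_⟩
        have hle : G j₀ ≤ G j := hG (hj₀min j hj)
        exact (sup_le_sup_left (le_trans inf_le_right hle) A) hvX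
      · obtain ⟨s0, hs0⟩ : ∃ s0 : Fin k, (s0 : ℕ) = k - 1 := ⟨⟨k - 1, by omega⟩, rfl⟩
        have hc := hC s0
        have hCk := Submodule.finrank_mono (inf_le_left : C ⊓ G s0 ≤ C)
        have hAC' : A < C := by
          refine lt_of_le_of_ne hAC (fun h => ?_)
          rw [h] at hA; omega
        obtain ⟨v, hvC, hvA⟩ := SetLike.exists_of_lt hAC'
        exact ⟨v, hvC, hvA, fun j hj => (hne ⟨j, hj⟩).elim⟩
    have hvA' : v ∈ A ⊔ Submodule.span ℂ {v} :=
      Submodule.mem_sup_right (Submodule.mem_span_singleton_self v)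
    have hAA' : A < A ⊔ Submodule.span ℂ {v} :=
      lt_of_le_of_ne le_sup_left (fun h => hvA (by rw [h]; exact hvA'))
    have hv0 : v ≠ 0 := fun h => hvA (h ▸ A.zero_mem)
    have hdimA' : Module.finrank ℂ ↥(A ⊔ Submodule.span ℂ {v}) = k - e := by
      have h1 := Submodule.finrank_sup_add_finrank_inf_eq A (Submodule.span ℂ {v})
      have h2 : Module.finrank ℂ ↥(Submodule.span ℂ {v}) = 1 :=
        finrank_span_singleton hv0
      have h3 := Submodule.finrank_lt_finrank_of_lt hAA'
      rw [h2] at h1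
      omega
    have hA'C : A ⊔ Submodule.span ℂ {v} ≤ C := sup_le hAC
      ((Submodule.span_singleton_le_iff_mem v C).mpr hvC)
    have hAG' : ∀ j : Fin k, e ≤ (j : ℕ) →
        (j : ℕ) + 1 - e ≤ Module.finrank ℂ ↥((A ⊔ Submodule.span ℂ {v}) ⊓ G j) := by
      intro j hj
      by_cases hjS : j ∈ S
      · have hvj := hvS j hjS
        obtain ⟨a, ha, g, hg, hag⟩ := Submodule.mem_sup.mp hvj
        have hgA' : g ∈ (A ⊔ Submodule.span ℂ {v}) ⊓ G j := by
          refine ⟨?_, hg⟩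
          have hge : g = v - a := by rw [← hag, add_sub_cancel_left]
          rw [hge]
          exact Submodule.sub_mem _ hvA' (Submodule.mem_sup_left ha)
        have hgA : g ∉ A ⊓ G j := fun hmem => hvA (by
          rw [← hag]; exact A.add_mem ha hmem.1)
        have hlt : A ⊓ G j < (A ⊔ Submodule.span ℂ {v}) ⊓ G j :=
          lt_of_le_of_ne (inf_le_inf_right _ le_sup_left)
            (fun h => hgA (by rw [h]; exact hgA'))
        have h4 := Submodule.finrank_lt_finrank_of_lt hlt
        by_cases hj2 : e + 1 ≤ (j : ℕ)
        · have := hAG j hj2; omega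
        · omega
      · rw [hS, Finset.mem_filter] at hjS
        push_neg at hjS
        have h5 := hjS (Finset.mem_univ j) hj
        have h6 := Submodule.finrank_mono
          (inf_le_inf_right (G j) (le_sup_left : A ≤ A ⊔ Submodule.span ℂ {v}))
        omega
    obtain ⟨W, hW1, hW2, hW3, hW4⟩ :=
      ih (by omega) (A ⊔ Submodule.span ℂ {v}) C hA'C hdimA' hC hAG'
    exact ⟨W, le_trans le_sup_left hW1, hW2, hW3, hW4⟩

/-- The key lemma, for an abstract monotone chain `G`. -/
lemma key_lemma {V : Type*} [AddCommGroup V] [Module ℂ V] [FiniteDimensional ℂ V]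
    {k d : ℕ} (hdk : d ≤ k)
    (G : Fin k → Submodule ℂ V) (hG : Monotone G)
    (A B C : Submodule ℂ V) (hAB : A ≤ B) (hBC : B ≤ C)
    (hA : Module.finrank ℂ A = k - d) (hB : Module.finrank ℂ B = k) :
    (∃ W : Submodule ℂ V, A ≤ W ∧ W ≤ C ∧ Module.finrank ℂ W = k ∧
      ∀ s : Fin k, (s : ℕ) + 1 ≤ Module.finrank ℂ ↥(W ⊓ G s)) ↔
    ((∀ s : Fin k, (s : ℕ) + 1 ≤ Module.finrank ℂ ↥(C ⊓ G s)) ∧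
      (∀ j : Fin k, d + 1 ≤ (j : ℕ) + 1 →
        (j : ℕ) + 1 - d ≤ Module.finrank ℂ ↥(A ⊓ G j))) := by
  constructor
  · rintro ⟨W, hAW, hWC, hWk, hWG⟩
    constructor
    · intro s
      have h1 := Submodule.finrank_mono (inf_le_inf_right (G s) hWC)
      have h2 := hWG s
      omega
    · intro j hj
      have h1 := Submodule.finrank_sup_add_finrank_inf_eq A (W ⊓ G j)
      have hinf : A ⊓ (W ⊓ G j) = A ⊓ G j := by
        rw [← inf_assoc, inf_eq_left.mpr hAW]
      rw [hinf] at h1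
      have h2 : Module.finrank ℂ ↥(A ⊔ (W ⊓ G j)) ≤ k := by
        rw [← hWk]
        exact Submodule.finrank_mono (sup_le hAW inf_le_left)
      have h3 := hWG j
      omega
  · rintro ⟨hC', hA'⟩
    exact aux_key G hG d hdk A C (le_trans hAB hBC) hA hC'
      (fun j hj => hA' j (by omega))

/-- (Key step of Lemma 4.3.) For a three-step flag
`V_{k-d} ≤ V_k ≤ V_{k+d}` in `ℂ^n`, there exists an intermediate `k`-dimensional
`V̄_k` with `V_{k-d} ≤ V̄_k ≤ V_{k+d}` and `dim V̄_k ∩ F^opp_{s+η_{k-s+1}} ≥ s`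
for all `1 ≤ s ≤ k` iff `dim V_{k+d} ∩ F^opp_{s+η_{k-s+1}} ≥ s` for `1 ≤ s ≤ k`
and `dim V_{k-d} ∩ F^opp_{j+η_{k-j+1}} ≥ j-d` for `d+1 ≤ j ≤ k`. -/
theorem rhs1_eq_rhs2 (n k d i : ℕ) (hk : 1 ≤ k) (hkn : k < n)
    (hi1 : 1 ≤ i) (hi2 : i ≤ n - k) (hd1 : 1 ≤ d) (hd2 : d < min (k + 1) (n - k))
    (eta : Fin k → ℕ) (hanti : Antitone eta) (hle : ∀ s, eta s ≤ n - k)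
    (A B C : Submodule ℂ (Fin n → ℂ))
    (hAB : A ≤ B) (hBC : B ≤ C)
    (hA : Module.finrank ℂ A = k - d) (hB : Module.finrank ℂ B = k)
    (hC : Module.finrank ℂ C = k + d) :
    (∃ W : Submodule ℂ (Fin n → ℂ), A ≤ W ∧ W ≤ C ∧ Module.finrank ℂ W = k ∧
      ∀ s : Fin k,
        (s : ℕ) + 1 ≤ Module.finrank ℂ
          ↥(W ⊓ oppFlag n ((s : ℕ) + 1 + eta ⟨k - 1 - (s : ℕ), by omega⟩))) ↔
    ((∀ s : Fin k,
        (s : ℕ) + 1 ≤ Module.finrank ℂ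
          ↥(C ⊓ oppFlag n ((s : ℕ) + 1 + eta ⟨k - 1 - (s : ℕ), by omega⟩))) ∧
      (∀ j : Fin k, d + 1 ≤ (j : ℕ) + 1 →
        (j : ℕ) + 1 - d ≤ Module.finrank ℂ
          ↥(A ⊓ oppFlag n ((j : ℕ) + 1 + eta ⟨k - 1 - (j : ℕ), by omega⟩)))) := by
  have hGmono : Monotone (fun s : Fin k =>
      oppFlag n ((s : ℕ) + 1 + eta ⟨k - 1 - (s : ℕ), by omega⟩)) := by
    intro s t hst
    apply oppFlag_mono
    have hst' : (s : ℕ) ≤ (t : ℕ) := hst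
    have h1 : (⟨k - 1 - (t : ℕ), by omega⟩ : Fin k) ≤ ⟨k - 1 - (s : ℕ), by omega⟩ := by
      simp only [Fin.mk_le_mk]; omega
    have h2 := hanti h1
    omega
  exact key_lemma (by omega)
    (fun s : Fin k => oppFlag n ((s : ℕ) + 1 + eta ⟨k - 1 - (s : ℕ), by omega⟩))
    hGmono A B C hAB hBC hA hB
end

section
/- Let η ∈ P_{k,n}, 1 ≤ d < n−k, 1 ≤ i ≤ n−k, and let V_k be a k-dimensional subspace of ℂ^n satisfying dim V_k ∩ (F^opp_{d+η_{k−d+1}} + F_{n−k−i+1}) ≥ 1, and for all d < j ≤ k: dim V_k ∩ F^opp_{j+η_{k−j+1}} ≥ j−d and dim V_k ∩ (F^opp_{j+η_{k−j+1}} + F_{n−k−i+1}) ≥ j−d+1. Then there exists a (k+d)-dimensional subspace V_{k+d} of ℂ^n containing V_k with dim V_{k+d} ∩ F_{n−k−i+1} ≥ 1 and dim V_{k+d} ∩ F^opp_{s+η_{k−s+1}} ≥ s for all 1 ≤ s ≤ k. -/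
open Module Submodule

namespace ExtAux

variable {n : ℕ}

lemma single_mem_oppFlag {r : ℕ} (j : Fin n) (h : n - r ≤ (j : ℕ)) :
    (Pi.single j 1 : Fin n → ℂ) ∈ oppFlag n r :=
  Submodule.subset_span ⟨j, h, rfl⟩

lemma oppFlag_mono {r r' : ℕ} (h : r ≤ r') : oppFlag n r ≤ oppFlag n r' :=
  Submodule.span_mono (by rintro v ⟨j, hj, rfl⟩; exact ⟨j, by omega, rfl⟩)

lemma le_finrank_oppFlag {r : ℕ} (h : r ≤ n) : r ≤ Module.finrank ℂ (oppFlag n r) := by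
  classical
  have hcard : Fintype.card {j : Fin n // n - r ≤ (j : ℕ)} = r := by
    have e : {j : Fin n // n - r ≤ (j : ℕ)} ≃ Fin r := by
      refine ⟨fun j => ⟨(j : Fin n).1 - (n - r), ?_⟩,
        fun i => ⟨⟨n - r + i.1, ?_⟩, ?_⟩, ?_, ?_⟩
      · have := (j : Fin n).isLt; have := j.2; omega
      · have := i.isLt; omega
      · show n - r ≤ n - r + i.1; omega
      · intro j; apply Subtype.ext; apply Fin.ext
        show n - r + ((j : Fin n).1 - (n - r)) = (j : Fin n).1
        have := j.2; omega
      · intro i; apply Fin.ext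
        show n - r + i.1 - (n - r) = i.1; omega
    rw [Fintype.card_congr e, Fintype.card_fin]
  have li : LinearIndependent ℂ
      (fun j : {j : Fin n // n - r ≤ (j : ℕ)} => (Pi.single (j : Fin n) 1 : Fin n → ℂ)) := by
    have h2 := (Pi.basisFun ℂ (Fin n)).linearIndependent.comp
      (fun j : {j : Fin n // n - r ≤ (j : ℕ)} => (j : Fin n)) Subtype.val_injective
    simpa [Function.comp_def] using h2
  have li2 : LinearIndependent ℂ
      (fun j : {j : Fin n // n - r ≤ (j : ℕ)} =>
        (⟨Pi.single (j : Fin n) 1, single_mem_oppFlag _ j.2⟩ : oppFlag n r)) :=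
    LinearIndependent.of_comp (oppFlag n r).subtype li
  calc r = Fintype.card {j : Fin n // n - r ≤ (j : ℕ)} := hcard.symm
    _ ≤ Module.finrank ℂ (oppFlag n r) := li2.fintype_card_le_finrank

lemma finrank_sup_singleton (p : Submodule ℂ (Fin n → ℂ)) {x : Fin n → ℂ} (hx : x ∉ p) :
    Module.finrank ℂ ↥(p ⊔ Submodule.span ℂ {x}) = Module.finrank ℂ p + 1 := by
  have hx0 : x ≠ 0 := fun h => hx (h ▸ p.zero_mem)
  have hdisj : p ⊓ Submodule.span ℂ {x} = ⊥ :=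
    disjoint_iff.mp ((Submodule.disjoint_span_singleton' hx0).mpr hx)
  have h := Submodule.finrank_sup_add_finrank_inf_eq p (Submodule.span ℂ {x})
  rw [hdisj, finrank_bot, finrank_span_singleton hx0] at h
  omega

lemma add_one_le_finrank_inf_sup (p E : Submodule ℂ (Fin n → ℂ)) {x : Fin n → ℂ}
    (hx : x ∉ p) (hxE : x ∈ E) :
    Module.finrank ℂ ↥(p ⊓ E) + 1 ≤ Module.finrank ℂ ↥((p ⊔ Submodule.span ℂ {x}) ⊓ E) := by
  have h2 : x ∉ p ⊓ E := fun h => hx h.1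
  have h1 : (p ⊓ E) ⊔ Submodule.span ℂ {x} ≤ (p ⊔ Submodule.span ℂ {x}) ⊓ E :=
    sup_le (le_inf (inf_le_left.trans le_sup_left) inf_le_right)
      (le_inf le_sup_right (Submodule.span_le.mpr (by simpa using hxE)))
  calc Module.finrank ℂ ↥(p ⊓ E) + 1
      = Module.finrank ℂ ↥((p ⊓ E) ⊔ Submodule.span ℂ {x}) := (finrank_sup_singleton _ h2).symm
    _ ≤ _ := Submodule.finrank_mono h1

lemma exists_supset_finrank_succ (p : Submodule ℂ (Fin n → ℂ)) (h : Module.finrank ℂ p < n) :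
    ∃ q, p ≤ q ∧ Module.finrank ℂ q = Module.finrank ℂ p + 1 := by
  have hne : p ≠ ⊤ := by
    intro he
    rw [he, finrank_top, Module.finrank_fin_fun] at h
    omega
  have hex : ∃ x, x ∉ p := by
    by_contra hco
    push_neg at hco
    exact hne (Submodule.eq_top_iff'.mpr hco)
  obtain ⟨x, hxp⟩ := hex
  exact ⟨p ⊔ Submodule.span ℂ {x}, le_sup_left, finrank_sup_singleton p hxp⟩

lemma greedy (k : ℕ) (E : ℕ → Submodule ℂ (Fin n → ℂ))
    (hmono : ∀ s t, s ≤ t → t ≤ k → E s ≤ E t)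
    (hdimE : ∀ s, s ≤ k → s ≤ Module.finrank ℂ (E s)) :
    ∀ (m : ℕ) (V : Submodule ℂ (Fin n → ℂ)), Module.finrank ℂ V + m ≤ n →
      (∀ s, s ≤ k → s - m ≤ Module.finrank ℂ ↥(V ⊓ E s)) →
      ∃ W, V ≤ W ∧ Module.finrank ℂ W = Module.finrank ℂ V + m ∧
        ∀ s, s ≤ k → s ≤ Module.finrank ℂ ↥(W ⊓ E s) := by
  intro m
  induction m with
  | zero =>
    intro V _ hc
    exact ⟨V, le_rfl, by omega, fun s hs => by simpa using hc s hs⟩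
  | succ m ih =>
    intro V hVn hc
    by_cases hall : ∀ s, s ≤ k → s - m ≤ Module.finrank ℂ ↥(V ⊓ E s)
    · obtain ⟨W', hW1, hW2, hW3⟩ := ih V (by omega) hall
      obtain ⟨W, hWa, hWb⟩ := exists_supset_finrank_succ W' (by omega)
      exact ⟨W, hW1.trans hWa, by omega,
        fun s hs => (hW3 s hs).trans (Submodule.finrank_mono (inf_le_inf_right _ hWa))⟩
    · push_neg at hall
      have hex : ∃ s, s ≤ k ∧ Module.finrank ℂ ↥(V ⊓ E s) < s - m := by
        obtain ⟨s, hs1, hs2⟩ := hall; exact ⟨s, hs1, by omega⟩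
      classical
      obtain ⟨hs₀k, hs₀lt⟩ := Nat.find_spec hex
      have hEnle : ¬ E (Nat.find hex) ≤ V := by
        intro hle
        have h1 : V ⊓ E (Nat.find hex) = E (Nat.find hex) := inf_eq_right.mpr hle
        have := hdimE (Nat.find hex) hs₀k
        rw [h1] at hs₀lt
        omega
      obtain ⟨u, huE, huV⟩ := SetLike.not_le_iff_exists.mp hEnle
      have hc1 : Module.finrank ℂ ↥(V ⊔ Submodule.span ℂ {u}) + m ≤ n := by
        rw [finrank_sup_singleton V huV]; omega
      have hc2 : ∀ s, s ≤ k → s - m ≤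
          Module.finrank ℂ ↥((V ⊔ Submodule.span ℂ {u}) ⊓ E s) := by
        intro s hs
        by_cases hss : s < Nat.find hex
        · have hmin := Nat.find_min hex hss
          push_neg at hmin
          exact (hmin hs).trans (Submodule.finrank_mono (inf_le_inf_right _ le_sup_left))
        · have hx := add_one_le_finrank_inf_sup V (E s) huV
            (hmono (Nat.find hex) s (by omega) hs huE)
          have := hc s hs
          omega
      obtain ⟨W, hWa, hWb, hWc⟩ := ih (V ⊔ Submodule.span ℂ {u}) hc1 hc2
      exact ⟨W, le_sup_left.trans hWa,
        by rw [hWb, finrank_sup_singleton V huV]; omega, hWc⟩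

end ExtAux

lemma ExtAux.main_aux {n k d : ℕ} (S : Submodule ℂ (Fin n → ℂ))
    (E : ℕ → Submodule ℂ (Fin n → ℂ))
    (hmono : ∀ s t, s ≤ t → t ≤ k → E s ≤ E t)
    (hdimE : ∀ s, s ≤ k → s ≤ Module.finrank ℂ (E s))
    (hd1 : 1 ≤ d) (hkdn : k + d ≤ n)
    (V : Submodule ℂ (Fin n → ℂ)) (hV : Module.finrank ℂ V = k)
    (hSx : ∃ x : Fin n → ℂ, x ≠ 0 ∧ x ∈ S)
    (key0 : 1 ≤ Module.finrank ℂ ↥(V ⊓ (E d ⊔ S)))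
    (key1 : ∀ s, d < s → s ≤ k → s - d ≤ Module.finrank ℂ ↥(V ⊓ E s))
    (key2 : ∀ s, d < s → s ≤ k →
      s - d + 1 ≤ Module.finrank ℂ ↥(V ⊓ (E s ⊔ S))) :
    ∃ W : Submodule ℂ (Fin n → ℂ), V ≤ W ∧ Module.finrank ℂ W = k + d ∧
      1 ≤ Module.finrank ℂ ↥(W ⊓ S) ∧
      ∀ s, s ≤ k → s ≤ Module.finrank ℂ ↥(W ⊓ E s) := by
  classical
  have span_le_inf : ∀ (p q : Submodule ℂ (Fin n → ℂ)) (x : Fin n → ℂ),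
      x ≠ 0 → x ∈ p → x ∈ q → 1 ≤ Module.finrank ℂ ↥(p ⊓ q) := by
    intro p q x hx hxp hxq
    calc (1 : ℕ) = Module.finrank ℂ ↥(Submodule.span ℂ {x}) :=
          (finrank_span_singleton hx).symm
      _ ≤ _ := Submodule.finrank_mono (Submodule.span_le.mpr (by
          simp [Set.singleton_subset_iff, hxp, hxq]))
  obtain ⟨V', m, hVV', hm, hS1, hcond⟩ :
      ∃ (V' : Submodule ℂ (Fin n → ℂ)) (m : ℕ), V ≤ V' ∧
        Module.finrank ℂ V' + m = k + d ∧
        1 ≤ Module.finrank ℂ ↥(V' ⊓ S) ∧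
        ∀ s, s ≤ k → s - m ≤ Module.finrank ℂ ↥(V' ⊓ E s) := by
    by_cases hQ : ∃ j, d ≤ j ∧ j ≤ k ∧ ¬ (V ⊓ (E j ⊔ S) ≤ E j)
    · obtain ⟨hj₀d, hj₀k, hj₀⟩ := Nat.find_spec hQ
      have hminQ : ∀ j, d ≤ j → j ≤ k → j < Nat.find hQ → V ⊓ (E j ⊔ S) ≤ E j := by
        intro j ha hb hc
        have := Nat.find_min hQ hc
        push_neg at this
        exact this ha hb
      obtain ⟨v, hvmem, hvnot⟩ := SetLike.not_le_iff_exists.mp hj₀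
      have hvV : v ∈ V := hvmem.1
      obtain ⟨a, haE, b, hbS, hab⟩ := Submodule.mem_sup.mp hvmem.2
      have hbne : b ≠ 0 := by
        rintro rfl
        rw [add_zero] at hab
        exact hvnot (hab ▸ haE)
      have hba : b = v - a := eq_sub_of_add_eq' hab
      by_cases haV : a ∈ V
      · refine ⟨V, d, le_rfl, by omega, ?_, ?_⟩
        · exact span_le_inf V S b hbne (hba ▸ sub_mem hvV haV) hbS
        · intro s hsk
          rcases le_or_gt s d with h | h
          · omega
          · exact key1 s h hsk
      · refine ⟨V ⊔ Submodule.span ℂ {a}, d - 1, le_sup_left, ?_, ?_, ?_⟩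
        · rw [ExtAux.finrank_sup_singleton V haV, hV]; omega
        · refine span_le_inf _ S b hbne ?_ hbS
          rw [hba]
          exact sub_mem (Submodule.mem_sup_left hvV)
            (Submodule.mem_sup_right (Submodule.mem_span_singleton_self a))
        · intro s hsk
          rcases lt_or_ge s d with h | h
          · omega
          · have hVle : Module.finrank ℂ ↥(V ⊓ E s) ≤
                Module.finrank ℂ ↥((V ⊔ Submodule.span ℂ {a}) ⊓ E s) :=
              Submodule.finrank_mono (inf_le_inf_right _ le_sup_left)
            rcases lt_or_ge s (Nat.find hQ) with h2 | h2
            · have hle2 := hminQ s h hsk h2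
              have heq : V ⊓ (E s ⊔ S) = V ⊓ E s :=
                le_antisymm (le_inf inf_le_left hle2) (inf_le_inf_left V le_sup_left)
              have hlow : s - d + 1 ≤ Module.finrank ℂ ↥(V ⊓ E s) := by
                rcases eq_or_lt_of_le h with rfl | hlt'
                · rw [← heq]; omega
                · rw [← heq]; exact key2 s hlt' hsk
              omega
            · have haEs : a ∈ E s := hmono (Nat.find hQ) s h2 hsk haE
              have hx := ExtAux.add_one_le_finrank_inf_sup V (E s) haV haEs
              have hlow : s - d ≤ Module.finrank ℂ ↥(V ⊓ E s) := by
                rcases eq_or_lt_of_le h with rfl | hlt'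
                · omega
                · exact key1 s hlt' hsk
              omega
    · push_neg at hQ
      have hstr : ∀ s, d ≤ s → s ≤ k → s - d + 1 ≤ Module.finrank ℂ ↥(V ⊓ E s) := by
        intro s hds hsk
        have heq : V ⊓ (E s ⊔ S) = V ⊓ E s :=
          le_antisymm (le_inf inf_le_left (hQ s hds hsk)) (inf_le_inf_left V le_sup_left)
        rcases eq_or_lt_of_le hds with rfl | hlt'
        · rw [← heq]; omega
        · have := key2 s hlt' hsk
          rw [heq] at this
          exact this
      by_cases hSV : S ≤ V
      · refine ⟨V, d, le_rfl, by omega, ?_, ?_⟩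
        · obtain ⟨x, hx0, hxS⟩ := hSx
          exact span_le_inf V S x hx0 (hSV hxS) hxS
        · intro s hsk
          rcases le_or_gt s d with h | h
          · omega
          · exact key1 s h hsk
      · obtain ⟨u, huS, huV⟩ := SetLike.not_le_iff_exists.mp hSV
        have hune : u ≠ 0 := fun h => huV (h ▸ V.zero_mem)
        refine ⟨V ⊔ Submodule.span ℂ {u}, d - 1, le_sup_left, ?_, ?_, ?_⟩
        · rw [ExtAux.finrank_sup_singleton V huV, hV]; omega
        · exact span_le_inf _ S u hune
            (Submodule.mem_sup_right (Submodule.mem_span_singleton_self u)) huS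
        · intro s hsk
          rcases lt_or_ge s d with h | h
          · omega
          · have := hstr s h hsk
            have hVle : Module.finrank ℂ ↥(V ⊓ E s) ≤
                Module.finrank ℂ ↥((V ⊔ Submodule.span ℂ {u}) ⊓ E s) :=
              Submodule.finrank_mono (inf_le_inf_right _ le_sup_left)
            omega
  obtain ⟨W, hW1, hW2, hW3⟩ := ExtAux.greedy k E hmono hdimE m V' (by omega) hcond
  refine ⟨W, hVV'.trans hW1, by omega, ?_, hW3⟩
  exact hS1.trans (Submodule.finrank_mono (inf_le_inf_right S hW1))

/-- (Lemma 4.1 of the paper.) Let `η ∈ P_{k,n}`, `1 ≤ i ≤ n-k`,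
`1 ≤ d < n-k`, and let `V_k ≤ ℂ^n` have dimension `k` with
`dim V_k ∩ (F^opp_{d+η_{k-d+1}} + F_{n-k-i+1}) ≥ 1` and, for all `d < j ≤ k`,
`dim V_k ∩ F^opp_{j+η_{k-j+1}} ≥ j-d` and
`dim V_k ∩ (F^opp_{j+η_{k-j+1}} + F_{n-k-i+1}) ≥ j-d+1`. Then there is
`V_{k+d} ⊇ V_k` of dimension `k+d` with `dim V_{k+d} ∩ F_{n-k-i+1} ≥ 1` and
`dim V_{k+d} ∩ F^opp_{s+η_{k-s+1}} ≥ s` for all `1 ≤ s ≤ k`. -/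
theorem exists_extension (n k d i : ℕ) (hk : 1 ≤ k) (hkn : k < n)
    (hi1 : 1 ≤ i) (hi2 : i ≤ n - k) (hd1 : 1 ≤ d) (hd2 : d < n - k)
    (eta : Fin k → ℕ) (hanti : Antitone eta) (hle : ∀ s, eta s ≤ n - k)
    (V : Submodule ℂ (Fin n → ℂ)) (hV : Module.finrank ℂ V = k)
    (h0 : 1 ≤ Module.finrank ℂ
      ↥(V ⊓ (oppFlag n (d + eta ⟨k - d, by omega⟩) ⊔ stdFlag n (n - k - i + 1))))
    (h1 : ∀ j : Fin k, d < (j : ℕ) + 1 →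
      (j : ℕ) + 1 - d ≤ Module.finrank ℂ
        ↥(V ⊓ oppFlag n ((j : ℕ) + 1 + eta ⟨k - 1 - (j : ℕ), by omega⟩)))
    (h2 : ∀ j : Fin k, d < (j : ℕ) + 1 →
      (j : ℕ) + 1 - d + 1 ≤ Module.finrank ℂ
        ↥(V ⊓ (oppFlag n ((j : ℕ) + 1 + eta ⟨k - 1 - (j : ℕ), by omega⟩) ⊔
            stdFlag n (n - k - i + 1)))) :
    ∃ W : Submodule ℂ (Fin n → ℂ), V ≤ W ∧ Module.finrank ℂ W = k + d ∧
      1 ≤ Module.finrank ℂ ↥(W ⊓ stdFlag n (n - k - i + 1)) ∧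
      ∀ s : Fin k,
        (s : ℕ) + 1 ≤ Module.finrank ℂ
          ↥(W ⊓ oppFlag n ((s : ℕ) + 1 + eta ⟨k - 1 - (s : ℕ), by omega⟩)) := by
  have hkd : k - d < k := by omega
  have hmono : ∀ s t : ℕ, s ≤ t → t ≤ k →
      oppFlag n (s + if h : k - s < k then eta ⟨k - s, h⟩ else 0) ≤
      oppFlag n (t + if h : k - t < k then eta ⟨k - t, h⟩ else 0) := by
    intro s t hst htk
    apply ExtAux.oppFlag_mono
    rcases Nat.eq_zero_or_pos s with rfl | hs
    · rw [dif_neg (by omega)]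
      omega
    · have h1' : k - s < k := by omega
      have h2' : k - t < k := by omega
      rw [dif_pos h1', dif_pos h2']
      have := hanti (a := ⟨k - t, h2'⟩) (b := ⟨k - s, h1'⟩) (by
        rw [Fin.mk_le_mk]; omega)
      omega
  have hdimE : ∀ s : ℕ, s ≤ k → s ≤ Module.finrank ℂ
      (oppFlag n (s + if h : k - s < k then eta ⟨k - s, h⟩ else 0)) := by
    intro s hsk
    have hb : (if h : k - s < k then eta ⟨k - s, h⟩ else 0) ≤ n - k := by
      split_ifs with h
      · exact hle _
      · omega
    have := ExtAux.le_finrank_oppFlag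
      (n := n) (r := s + if h : k - s < k then eta ⟨k - s, h⟩ else 0) (by omega)
    omega
  have hEd : (d + if h : k - d < k then eta ⟨k - d, h⟩ else 0) = d + eta ⟨k - d, hkd⟩ := by
    rw [dif_pos hkd]
  have key0 : 1 ≤ Module.finrank ℂ
      ↥(V ⊓ (oppFlag n (d + if h : k - d < k then eta ⟨k - d, h⟩ else 0) ⊔
        stdFlag n (n - k - i + 1))) := by
    rw [hEd]
    exact h0
  have key1 : ∀ s, d < s → s ≤ k → s - d ≤ Module.finrank ℂ
      ↥(V ⊓ oppFlag n (s + if h : k - s < k then eta ⟨k - s, h⟩ else 0)) := by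
    intro s hds hsk
    have hlt : k - s < k := by omega
    have p1 : k - 1 - (s - 1) < k := by omega
    have h : s - 1 + 1 - d ≤ Module.finrank ℂ
        ↥(V ⊓ oppFlag n (s - 1 + 1 + eta ⟨k - 1 - (s - 1), p1⟩)) :=
      h1 ⟨s - 1, by omega⟩ (by show d < s - 1 + 1; omega)
    have h3 : (⟨k - 1 - (s - 1), p1⟩ : Fin k) = ⟨k - s, hlt⟩ := by
      apply Fin.ext; show k - 1 - (s - 1) = k - s; omega
    have heq : oppFlag n (s - 1 + 1 + eta ⟨k - 1 - (s - 1), p1⟩) =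
        oppFlag n (s + if h : k - s < k then eta ⟨k - s, h⟩ else 0) := by
      rw [dif_pos hlt, h3]
      congr 1
      omega
    rw [heq] at h
    omega
  have key2 : ∀ s, d < s → s ≤ k → s - d + 1 ≤ Module.finrank ℂ
      ↥(V ⊓ (oppFlag n (s + if h : k - s < k then eta ⟨k - s, h⟩ else 0) ⊔
        stdFlag n (n - k - i + 1))) := by
    intro s hds hsk
    have hlt : k - s < k := by omega
    have p1 : k - 1 - (s - 1) < k := by omega
    have h : s - 1 + 1 - d + 1 ≤ Module.finrank ℂ
        ↥(V ⊓ (oppFlag n (s - 1 + 1 + eta ⟨k - 1 - (s - 1), p1⟩) ⊔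
          stdFlag n (n - k - i + 1))) :=
      h2 ⟨s - 1, by omega⟩ (by show d < s - 1 + 1; omega)
    have h3 : (⟨k - 1 - (s - 1), p1⟩ : Fin k) = ⟨k - s, hlt⟩ := by
      apply Fin.ext; show k - 1 - (s - 1) = k - s; omega
    have heq : oppFlag n (s - 1 + 1 + eta ⟨k - 1 - (s - 1), p1⟩) =
        oppFlag n (s + if h : k - s < k then eta ⟨k - s, h⟩ else 0) := by
      rw [dif_pos hlt, h3]
      congr 1
      omega
    rw [heq] at h
    omega
  have hSx : ∃ x : Fin n → ℂ, x ≠ 0 ∧ x ∈ stdFlag n (n - k - i + 1) := by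
    refine ⟨Pi.single (⟨0, by omega⟩ : Fin n) 1, ?_, ?_⟩
    · intro hzero
      have := congrFun hzero ⟨0, by omega⟩
      simp at this
    · exact Submodule.subset_span ⟨⟨0, by omega⟩, by show 0 < n - k - i + 1; omega, rfl⟩
  have H : ∃ W : Submodule ℂ (Fin n → ℂ), V ≤ W ∧ Module.finrank ℂ W = k + d ∧
      1 ≤ Module.finrank ℂ ↥(W ⊓ stdFlag n (n - k - i + 1)) ∧
      ∀ s : ℕ, s ≤ k → s ≤ Module.finrank ℂ
        ↥(W ⊓ oppFlag n (s + if h : k - s < k then eta ⟨k - s, h⟩ else 0)) :=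
    ExtAux.main_aux (stdFlag n (n - k - i + 1))
      (fun s => oppFlag n (s + if h : k - s < k then eta ⟨k - s, h⟩ else 0))
      hmono hdimE hd1 (by omega) V hV hSx key0 key1 key2
  refine ⟨H.choose, H.choose_spec.1, H.choose_spec.2.1, H.choose_spec.2.2.1, fun s => ?_⟩
  have hlt' : k - ((s : ℕ) + 1) < k := by omega
  have hx := H.choose_spec.2.2.2 ((s : ℕ) + 1) (by omega)
  rw [dif_pos hlt'] at hx
  have e3 : (⟨k - ((s : ℕ) + 1), hlt'⟩ : Fin k) =
      (⟨k - 1 - (s : ℕ), by omega⟩ : Fin k) := by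
    apply Fin.ext; show k - ((s : ℕ) + 1) = k - 1 - (s : ℕ); omega
  rw [e3] at hx
  exact hx
end
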